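/- arXiv:2106.12099 — 5 statements merged into one kernel-verified Lean document; each statement's English description precedes it below -/
import Mathlib

section
/- For every integer d ≥ 1, every finite simple graph with minimum degree at least 2d contains a (nonempty) subgraph that is bipartite and has minimum degree at least d. -/
/-!
Take a maximum cut `(s, sᶜ)` of `G`. Moving a vertex `v` to the other side toggles exactly the
edges at `v`, so it changes the size of the cut by `deg v - 2 · deg_cut v`; maximality therefore
gives `deg v ≤ 2 · deg_cut v` at every vertex, and the spanning subgraph of cut edges is
bipartite.
-/

open scoped symmDiff

theorem Set.ncard_symmDiff_add_two_mul_ncard_inter {α : Type*} {s t : Set α}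
    (hs : s.Finite) (ht : t.Finite) :
    (s ∆ t).ncard + 2 * (s ∩ t).ncard = s.ncard + t.ncard := by
  have hst : (s ∆ t).Finite := (hs.union ht).subset symmDiff_le_sup
  have hunion : s ∆ t ∪ s ∩ t = s ∪ t := symmDiff_sup_inf s t
  have hdisj : Disjoint (s ∆ t) (s ∩ t) := disjoint_symmDiff_inf s t
  rw [← Set.ncard_union_add_ncard_inter s t hs ht, ← hunion,
    Set.ncard_union_eq hdisj hst (hs.inter_of_left t)]
  ring

namespace SimpleGraph

variable {V : Type*} {G H : SimpleGraph V}

theorem ncard_neighborSet_eq_degree (G : SimpleGraph V) (v : V) [Fintype (G.neighborSet v)] :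
    (G.neighborSet v).ncard = G.degree v := by
  rw [← Nat.card_coe_set_eq, Nat.card_eq_fintype_card, card_neighborSet_eq_degree]

theorem ncard_incidenceSet (G : SimpleGraph V) (v : V) :
    (G.incidenceSet v).ncard = (G.neighborSet v).ncard := by
  classical
  exact Nat.card_congr (G.incidenceSetEquivNeighborSet v)

theorem edgeSet_inter_incidenceSet_of_le (h : H ≤ G) (v : V) :
    H.edgeSet ∩ G.incidenceSet v = H.incidenceSet v := by
  ext e
  exact ⟨fun ⟨he, _, hv⟩ => ⟨he, hv⟩, fun ⟨he, hv⟩ => ⟨he, edgeSet_mono h he, hv⟩⟩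

theorem edgeSet_between_symmDiff_singleton (s : Set V) (v : V) :
    (G.between (s ∆ {v}) (s ∆ {v})ᶜ).edgeSet = (G.between s sᶜ).edgeSet ∆ G.incidenceSet v := by
  ext e
  induction e using Sym2.ind with
  | _ a b =>
  simp only [mem_edgeSet, between_adj, Set.mem_symmDiff, incidenceSet, Set.mem_ofPred_eq,
    Sym2.mem_iff, Set.mem_compl_iff, Set.mem_singleton_iff]
  by_cases hab : G.Adj a b
  · grind [hab.ne]
  · simp [hab]

theorem ncard_edgeSet_between_symmDiff_singleton [Finite V] (s : Set V) (v : V) :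
    (G.between (s ∆ {v}) (s ∆ {v})ᶜ).edgeSet.ncard + 2 * ((G.between s sᶜ).neighborSet v).ncard
      = (G.between s sᶜ).edgeSet.ncard + (G.neighborSet v).ncard := by
  rw [edgeSet_between_symmDiff_singleton, ← ncard_incidenceSet, ← ncard_incidenceSet,
    ← edgeSet_inter_incidenceSet_of_le between_le]
  exact Set.ncard_symmDiff_add_two_mul_ncard_inter (Set.toFinite _) (Set.toFinite _)

theorem exists_ncard_neighborSet_le_two_mul_between [Finite V] (G : SimpleGraph V) :
    ∃ s : Set V, ∀ v, (G.neighborSet v).ncard ≤ 2 * ((G.between s sᶜ).neighborSet v).ncard := by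
  obtain ⟨s, hmax⟩ := Finite.exists_max fun s : Set V => (G.between s sᶜ).edgeSet.ncard
  refine ⟨s, fun v => ?_⟩
  have hflip := ncard_edgeSet_between_symmDiff_singleton (G := G) s v
  have hle := hmax (s ∆ {v})
  omega

end SimpleGraph

theorem stmt1_general {V : Type*} [Fintype V] [Nonempty V] (d : ℕ)
    (G : SimpleGraph V) [DecidableRel G.Adj] (h : 2 * d ≤ G.minDegree) :
    ∃ H : G.Subgraph, H.verts.Nonempty ∧ H.coe.Colorable 2 ∧
      ∀ v ∈ H.verts, d ≤ (H.neighborSet v).ncard := by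
  obtain ⟨s, hs⟩ := G.exists_ncard_neighborSet_le_two_mul_between
  refine ⟨SimpleGraph.toSubgraph (G.between s sᶜ) SimpleGraph.between_le, Set.univ_nonempty,
    ?_, fun v _ => ?_⟩
  · exact (SimpleGraph.between_isBipartite disjoint_compl_right).of_hom ⟨Subtype.val, id⟩
  · have hcut := hs v
    have hdeg : 2 * d ≤ (G.neighborSet v).ncard :=
      (h.trans (G.minDegree_le_degree v)).trans_eq (G.ncard_neighborSet_eq_degree v).symm
    change d ≤ ((G.between s sᶜ).neighborSet v).ncard
    omega

/-- For every integer `d ≥ 1`, every finite simple graph with minimum degree at least `2d`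
contains a nonempty bipartite subgraph with minimum degree at least `d`. -/
theorem stmt1 {V : Type*} [Fintype V] [Nonempty V] (d : ℕ) (hd : 1 ≤ d)
    (G : SimpleGraph V) [DecidableRel G.Adj] (h : 2 * d ≤ G.minDegree) :
    ∃ H : G.Subgraph, H.verts.Nonempty ∧ H.coe.Colorable 2 ∧
      ∀ v ∈ H.verts, d ≤ (H.neighborSet v).ncard :=
  stmt1_general d G h
end

section
/- Let G be a finite simple graph and let H₁, …, H_t be pairwise vertex-disjoint bipartite subgraphs of G. Suppose P₁, …, P_k are internally disjoint paths in G such that each P_i joins H_j and H_ℓ for some distinct j, ℓ (meeting H_j only in its first vertex, H_ℓ only in its last vertex, and avoiding all other H_b). Then there is a subset Q of {P₁,…,P_k} with |Q| ≥ k/2 such that the union of all the H_i together with all paths in Q is a bipartite subgraph of G. -/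
open SimpleGraph Finset

private lemma zmod2_add_one_ne (a : ZMod 2) : a + 1 ≠ a := by revert a; decide

private lemma zmod2_add_one_eq_iff (a b : ZMod 2) : a + 1 = b ↔ ¬ a = b := by
  revert a b; decide

private lemma fin2_cast_ne {a b : Fin 2} (h : a ≠ b) :
    ((a : ℕ) : ZMod 2) ≠ ((b : ℕ) : ZMod 2) := by
  fin_cases a <;> fin_cases b <;> simp_all

/-- A path can be properly 2-colored starting at any value, ending at start + length. -/
private lemma pathColor {V : Type*} {G : SimpleGraph V} {u w : V} (W : G.Walk u w)
    (hW : W.IsPath) (a : ZMod 2) :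
    ∃ c : V → ZMod 2, c u = a ∧ c w = a + (W.length : ZMod 2) ∧
      ∀ x y, s(x, y) ∈ W.edges → c x ≠ c y := by
  classical
  induction W generalizing a with
  | nil => exact ⟨fun _ => a, rfl, by simp, by simp⟩
  | @cons u v w h W ih =>
    have hW' : W.IsPath := hW.of_cons
    have hu : u ∉ W.support := ((Walk.cons_isPath_iff h W).mp hW).2
    obtain ⟨c', hc'u, hc'w, hc'⟩ := ih hW' (a + 1)
    refine ⟨fun x => if x = u then a else c' x, by simp, ?_, ?_⟩
    · have hwne : w ≠ u := fun hh => hu (hh ▸ W.end_mem_support)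
      simp only [if_neg hwne, Walk.length_cons, hc'w]
      push_cast
      ring
    · intro x y hxy
      rw [Walk.edges_cons, List.mem_cons] at hxy
      rcases hxy with h1 | h2
      · have hvne : v ≠ u := h.ne'
        rcases Sym2.eq_iff.mp h1 with ⟨hx, hy⟩ | ⟨hx, hy⟩
        · subst hx; subst hy
          simp only [if_pos rfl, if_neg hvne, hc'u]
          exact fun hh => zmod2_add_one_ne a hh.symm
        · subst hx; subst hy
          simp only [if_pos rfl, if_neg hvne, hc'u]
          exact zmod2_add_one_ne a
      · have hx : x ∈ W.support := W.fst_mem_support_of_mem_edges h2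
        have hy : y ∈ W.support := W.snd_mem_support_of_mem_edges h2
        have hxu : x ≠ u := fun hh => hu (hh ▸ hx)
        have hyu : y ≠ u := fun hh => hu (hh ▸ hy)
        simp only [if_neg hxu, if_neg hyu]
        exact hc' x y h2

private lemma half_card {α : Type*} [Fintype α] (p : α → Prop) [DecidablePred p]
    (φ : α → α) (hinv : ∀ x, φ (φ x) = x) (hflip : ∀ x, p (φ x) ↔ ¬ p x) :
    2 * (Finset.univ.filter p).card = Fintype.card α := by
  classical
  have hcard : (Finset.univ.filter p).card = (Finset.univ.filter (fun x => ¬ p x)).card := by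
    apply Finset.card_bij' (fun a _ => φ a) (fun b _ => φ b)
    · intro a ha
      simp only [Finset.mem_filter, Finset.mem_univ, true_and] at ha ⊢
      exact fun hh => (hflip a).mp hh ha
    · intro b hb
      simp only [Finset.mem_filter, Finset.mem_univ, true_and] at hb ⊢
      exact (hflip b).mpr hb
    · intro a _; exact hinv a
    · intro b _; exact hinv b
  have h2 := Finset.card_filter_add_card_filter_not (s := (Finset.univ : Finset α)) p
  rw [two_mul]
  nth_rewrite 2 [hcard]
  rw [h2, Finset.card_univ]

private lemma exists_eps {t k : ℕ} (j l : Fin k → Fin t) (hjl : ∀ i, j i ≠ l i)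
    (good : (Fin t → ZMod 2) → Fin k → Prop)
    (hflip : ∀ ε i, good (Function.update ε (j i) (ε (j i) + 1)) i ↔ ¬ good ε i)
    [inst : ∀ ε, DecidablePred (good ε)] :
    ∃ ε : Fin t → ZMod 2, k ≤ 2 * (Finset.univ.filter (good ε)).card := by
  classical
  by_contra hcon
  push_neg at hcon
  have hsum : ∑ ε : Fin t → ZMod 2, 2 * (Finset.univ.filter (good ε)).card
      = Fintype.card (Fin t → ZMod 2) * k := by
    have h1 : ∀ ε, 2 * (Finset.univ.filter (good ε)).card
        = ∑ i : Fin k, 2 * (if good ε i then 1 else 0) := by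
      intro ε
      rw [Finset.card_filter, Finset.mul_sum]
    simp_rw [h1]
    rw [Finset.sum_comm]
    have h2 : ∀ i : Fin k, ∑ ε : Fin t → ZMod 2, 2 * (if good ε i then 1 else 0)
        = Fintype.card (Fin t → ZMod 2) := by
      intro i
      rw [← Finset.mul_sum, ← Finset.card_filter]
      apply half_card (fun ε => good ε i) (fun ε => Function.update ε (j i) (ε (j i) + 1))
      · intro ε
        funext a
        rcases eq_or_ne a (j i) with ha | ha
        · subst ha
          simp only [Function.update_self]
          have hz : ∀ x : ZMod 2, x + 1 + 1 = x := by decide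
          exact hz _
        · simp only [Function.update_of_ne ha]
      · intro ε; exact hflip ε i
    simp_rw [h2]
    rw [Finset.sum_const, Finset.card_univ, smul_eq_mul, mul_comm, Fintype.card_fin]
  have hlt : ∑ ε : Fin t → ZMod 2, 2 * (Finset.univ.filter (good ε)).card
      < ∑ _ε : Fin t → ZMod 2, k := by
    apply Finset.sum_lt_sum_of_nonempty
    · exact ⟨fun _ => 0, Finset.mem_univ _⟩
    · intro ε _; exact hcon ε
  rw [hsum, Finset.sum_const, Finset.card_univ, smul_eq_mul] at hlt
  exact lt_irrefl _ hlt




/-- Main lemma for constructing bipartite subgraphs: given pairwise vertex-disjoint bipartite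
subgraphs `H 1, …, H t` of `G` and internally disjoint paths `P 1, …, P k`, each joining two
distinct `H`'s and avoiding all the others, at least half of the paths can be kept so that the
union of all the `H`'s with the kept paths is a bipartite subgraph of `G`. -/
theorem stmt3 {V : Type*} (G : SimpleGraph V) (t k : ℕ)
    (H : Fin t → G.Subgraph)
    (hdisj : ∀ a b : Fin t, a ≠ b → Disjoint (H a).verts (H b).verts)
    (hbip : ∀ a : Fin t, (H a).coe.Colorable 2)
    (u w : Fin k → V) (j l : Fin k → Fin t) (hjl : ∀ i, j i ≠ l i)
    (P : (i : Fin k) → G.Walk (u i) (w i))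
    (hpath : ∀ i, (P i).IsPath)
    (hfirst : ∀ i, u i ∈ (H (j i)).verts ∧
      ∀ v ∈ (P i).support, v ∈ (H (j i)).verts → v = u i)
    (hlast : ∀ i, w i ∈ (H (l i)).verts ∧
      ∀ v ∈ (P i).support, v ∈ (H (l i)).verts → v = w i)
    (havoid : ∀ i, ∀ b : Fin t, b ≠ j i → b ≠ l i →
      ∀ v ∈ (P i).support, v ∉ (H b).verts)
    (hint : ∀ i i' : Fin k, i ≠ i' →
      ∀ v ∈ (P i).support, v ∈ (P i').support → v = u i ∨ v = w i) :
    ∃ Q : Finset (Fin k), k ≤ 2 * Q.card ∧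
      (((⨆ a, H a) ⊔ Q.sup fun i => (P i).toSubgraph).coe.Colorable 2) := by
  classical
  -- choose 2-colorings of the H's
  have C : ∀ a : Fin t, (H a).coe.Coloring (Fin 2) := fun a => (hbip a).some
  set f : Fin t → V → ZMod 2 := fun a v =>
    if h : v ∈ (H a).verts then (((C a ⟨v, h⟩ : Fin 2) : ℕ) : ZMod 2) else 0 with hfdef
  have hfval : ∀ a v (h : v ∈ (H a).verts),
      f a v = (((C a ⟨v, h⟩ : Fin 2) : ℕ) : ZMod 2) := by
    intro a v h
    simp only [hfdef]
    exact dif_pos h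
  -- the parity condition
  set good : (Fin t → ZMod 2) → Fin k → Prop := fun ε i =>
    f (j i) (u i) + ε (j i) + ((P i).length : ZMod 2) = f (l i) (w i) + ε (l i)
    with hgooddef
  obtain ⟨ε, hε⟩ := exists_eps j l hjl good (by
    intro ε i
    simp only [hgooddef, Function.update_self, Function.update_of_ne (hjl i).symm]
    have hrw : f (j i) (u i) + (ε (j i) + 1) + ((P i).length : ZMod 2)
        = (f (j i) (u i) + ε (j i) + ((P i).length : ZMod 2)) + 1 := by ring
    rw [hrw]
    exact zmod2_add_one_eq_iff _ _) (inst := fun _ => Classical.decPred _)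
  set Q : Finset (Fin k) := @Finset.filter _ (good ε) (Classical.decPred _) Finset.univ with hQdef
  -- colorings of the paths
  have hpc : ∀ i : Fin k, ∃ c : V → ZMod 2,
      c (u i) = f (j i) (u i) + ε (j i) ∧
      c (w i) = f (j i) (u i) + ε (j i) + ((P i).length : ZMod 2) ∧
      ∀ x y, s(x, y) ∈ (P i).edges → c x ≠ c y :=
    fun i => pathColor (P i) (hpath i) _
  choose pc hpcu hpcw hpce using hpc
  -- the global coloring
  set c : V → ZMod 2 := fun v =>
    if h : ∃ a, v ∈ (H a).verts then f h.choose v + ε h.choose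
    else if h' : ∃ i, v ∈ (P i).support then pc h'.choose v else 0 with hcdef
  have hcH : ∀ a v, v ∈ (H a).verts → c v = f a v + ε a := by
    intro a v hv
    have hex : ∃ b, v ∈ (H b).verts := ⟨a, hv⟩
    have hch : hex.choose = a := by
      by_contra hne
      exact Set.disjoint_left.mp (hdisj _ _ hne) hex.choose_spec hv
    simp only [hcdef]
    rw [dif_pos hex, hch]
  have hcP : ∀ i, i ∈ Q → ∀ x ∈ (P i).support, c x = pc i x := by
    intro i hiQ x hx
    by_cases hex : ∃ a, x ∈ (H a).verts
    · obtain ⟨a, ha⟩ := hex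
      have haj : a = j i ∨ a = l i := by
        by_contra hcontra
        push_neg at hcontra
        exact havoid i a hcontra.1 hcontra.2 x hx ha
      rcases haj with rfl | rfl
      · have hxu : x = u i := (hfirst i).2 x hx ha
        subst hxu
        rw [hcH _ _ ha, hpcu i]
      · have hxw : x = w i := (hlast i).2 x hx ha
        subst hxw
        rw [hcH _ _ ha, hpcw i]
        have hgood : good ε i :=
          ((@Finset.mem_filter _ (good ε) (Classical.decPred _) Finset.univ i).mp hiQ).2
        exact hgood.symm
    · have hex' : ∃ i', x ∈ (P i').support := ⟨i, hx⟩
      have hch : hex'.choose = i := by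
        by_contra hne
        rcases hint hex'.choose i hne x hex'.choose_spec hx with h1 | h1
        · exact hex ⟨j hex'.choose,
            by have := (hfirst hex'.choose).1; rwa [← h1] at this⟩
        · exact hex ⟨l hex'.choose,
            by have := (hlast hex'.choose).1; rwa [← h1] at this⟩
      simp only [hcdef]
      rw [dif_neg hex, dif_pos hex', hch]
  -- validity of the coloring
  have hvalid : ∀ x y, ((⨆ a, H a) ⊔ Q.sup fun i => (P i).toSubgraph).Adj x y →
      c x ≠ c y := by
    intro x y hxy
    rcases SimpleGraph.Subgraph.sup_adj.mp hxy with hxy | hxy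
    · obtain ⟨a, ha⟩ := SimpleGraph.Subgraph.iSup_adj.mp hxy
      have hxv : x ∈ (H a).verts := (H a).edge_vert ha
      have hyv : y ∈ (H a).verts := (H a).edge_vert ha.symm
      rw [hcH a x hxv, hcH a y hyv]
      intro hcc
      have hfa : f a x = f a y := add_right_cancel hcc
      have hco : (H a).coe.Adj ⟨x, hxv⟩ ⟨y, hyv⟩ := ha
      have hne := (C a).valid hco
      exact fin2_cast_ne hne (by rw [← hfval a x hxv, ← hfval a y hyv]; exact hfa)
    · have hexi : ∃ i ∈ Q, (P i).toSubgraph.Adj x y := by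
        rw [Finset.sup_eq_iSup] at hxy
        obtain ⟨i, hi⟩ := SimpleGraph.Subgraph.iSup_adj.mp hxy
        obtain ⟨hiq, hadj⟩ := SimpleGraph.Subgraph.iSup_adj.mp hi
        exact ⟨i, hiq, hadj⟩
      obtain ⟨i, hiQ, hadj⟩ := hexi
      have he : s(x, y) ∈ (P i).edges :=
        ((P i).mem_edges_toSubgraph).mp (SimpleGraph.Subgraph.mem_edgeSet.mpr hadj)
      have hx := (P i).fst_mem_support_of_mem_edges he
      have hy := (P i).snd_mem_support_of_mem_edges he
      rw [hcP i hiQ x hx, hcP i hiQ y hy]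
      exact hpce i x y he
  refine ⟨Q, by rw [hQdef]; exact hε, ?_⟩
  have col : ((⨆ a, H a) ⊔ Q.sup fun i => (P i).toSubgraph).coe.Coloring (ZMod 2) :=
    SimpleGraph.Coloring.mk (fun v => c v.1)
      (fun {a b} hab => hvalid a.1 b.1 (by exact hab))
  have hcol := col.colorable
  rwa [ZMod.card] at hcol
end

section
/- For every integer k ≥ 1, every finite simple graph with average degree at least 8k contains a (k+1)-connected bipartite subgraph. -/
/-!
Some cut `G.between s sᶜ` keeps at least half of the edges of `G`: averaged over all `2 ^ |V|`
vertex subsets `s`, each edge is cut exactly half of the time. This bipartite graph has average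
degree at least `4k`, and Mader's argument finds a `(k+1)`-connected subgraph in it: among the
vertex sets `A` with `|A| ≥ 2k` and `e(A) > 2k (|A| - k)` take a minimal one. Deleting a vertex of
degree at most `2k` from `A`, or splitting `A` along a separator of at most `k` vertices into two
overlapping parts, would yield a smaller such set, so `A` itself spans a `(k+1)`-connected graph.
-/

open Finset

lemma Finset.two_mul_card_separating {α : Type*} [Fintype α] [DecidableEq α] {x y : α}
    (hxy : x ≠ y) :
    2 * #{s : Finset α | ¬(x ∈ s ↔ y ∈ s)} = 2 ^ Fintype.card α := by
  have htoggle (s : Finset α) :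
      (x ∈ symmDiff s {x} ↔ y ∈ symmDiff s {x}) ↔ ¬(x ∈ s ↔ y ∈ s) := by
    simp only [mem_symmDiff, mem_singleton, hxy.symm]
    tauto
  have hcard : #{s : Finset α | ¬(x ∈ s ↔ y ∈ s)} = #{s : Finset α | ¬¬(x ∈ s ↔ y ∈ s)} :=
    card_nbij' (symmDiff · {x}) (symmDiff · {x})
      (fun s hs => by simp_all) (fun s hs => by simp_all)
      (fun s _ => symmDiff_symmDiff_cancel_right _ _)
      (fun s _ => symmDiff_symmDiff_cancel_right _ _)
  rw [two_mul]
  nth_rw 2 [hcard]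
  rw [card_filter_add_card_filter_not, card_univ, Fintype.card_finset]

namespace SimpleGraph

variable {V : Type*}

section VertexConnectivity

variable {G B : SimpleGraph V}

def Subgraph.IsVertexConnected (H : G.Subgraph) (k : ℕ) : Prop :=
  k < H.verts.ncard ∧ ∀ S ⊆ H.verts, S.ncard < k → (H.deleteVerts S).coe.Connected

def Subgraph.ofLE (h : B ≤ G) (H : B.Subgraph) : G.Subgraph where
  verts := H.verts
  Adj := H.Adj
  adj_sub hxy := h (H.adj_sub hxy)
  edge_vert := H.edge_vert
  symm := H.symm

lemma Subgraph.IsVertexConnected.ofLE {H : B.Subgraph} {k : ℕ} (hH : H.IsVertexConnected k)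
    (h : B ≤ G) : (H.ofLE h).IsVertexConnected k :=
  hH

lemma Subgraph.exists_adj_closed_of_not_preconnected {H : G.Subgraph}
    (h : ¬ H.coe.Preconnected) :
    ∃ C ⊆ H.verts, ∃ u ∈ C, ∃ v ∈ H.verts, v ∉ C ∧ ∀ x ∈ C, ∀ y, H.Adj x y → y ∈ C := by
  obtain ⟨u, v, huv⟩ : ∃ u v : H.verts, ¬ H.coe.Reachable u v := by
    simpa [Preconnected] using h
  set c := H.coe.connectedComponentMk u
  refine ⟨(↑) '' (c : Set H.verts), by simp, u, ⟨u, rfl, rfl⟩, v, v.2, ?_,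
    fun x hx y hxy => ConnectedComponent.mem_coe_supp_of_adj hx hxy.snd_mem hxy⟩
  rintro ⟨w, hw, hwv⟩
  obtain rfl : w = v := Subtype.ext hwv
  exact huv (ConnectedComponent.exact hw).symm

end VertexConnectivity

section Interedges

variable (B : SimpleGraph V) [DecidableRel B.Adj] {A : Finset V}

lemma card_filter_adj_lt_card {v : V} {A' : Finset V} (hv : v ∈ A')
    (h : ∀ w ∈ A, B.Adj v w → w ∈ A') : #{w ∈ A | B.Adj v w} < #A' := by
  refine card_lt_card ⟨fun w hw => h w (mem_filter.1 hw).1 (mem_filter.1 hw).2, fun hsub => ?_⟩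
  exact B.loopless.irrefl v (mem_filter.1 (hsub hv)).2

variable [DecidableEq V]

lemma card_interedges_singleton_left (v : V) (A : Finset V) :
    #(B.interedges {v} A) = #{w ∈ A | B.Adj v w} := by
  rw [interedges, Rel.interedges_eq_biUnion, singleton_biUnion, card_map]

lemma card_interedges_le_card_interedges_erase_add (A : Finset V) (v : V) :
    #(B.interedges A A) ≤
      #(B.interedges (A.erase v) (A.erase v)) + 2 * #{w ∈ A | B.Adj v w} := by
  have hcover : B.interedges A A ⊆
      B.interedges (A.erase v) (A.erase v) ∪ (B.interedges {v} A ∪ B.interedges A {v}) := by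
    rintro ⟨x, y⟩ hxy
    simp only [mem_union, mk_mem_interedges_iff, mem_erase, mem_singleton] at hxy ⊢
    tauto
  have hswap : #(B.interedges A {v}) = #(B.interedges {v} A) :=
    have := B.symm
    Rel.card_interedges_comm _ _
  calc #(B.interedges A A)
      ≤ #(B.interedges (A.erase v) (A.erase v)) +
          (#(B.interedges {v} A) + #(B.interedges A {v})) :=
        (card_le_card hcover).trans <| (card_union_le _ _).trans <| by
          gcongr
          exact card_union_le _ _
    _ = _ := by rw [hswap, card_interedges_singleton_left]; ring

lemma card_interedges_le_add_of_subset_union {A₁ A₂ : Finset V} (hA : A ⊆ A₁ ∪ A₂)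
    (hcut : ∀ x ∈ A₁ \ A₂, ∀ y ∈ A₂ \ A₁, ¬ B.Adj x y) :
    #(B.interedges A A) ≤ #(B.interedges A₁ A₁) + #(B.interedges A₂ A₂) := by
  refine (card_le_card ?_).trans (card_union_le _ _)
  rintro ⟨x, y⟩ hxy
  simp only [mem_union, mk_mem_interedges_iff] at hxy ⊢
  have hx := hA hxy.1
  have hy := hA hxy.2.1
  have hxy' := hcut x
  have hyx' := hcut y
  simp only [mem_union, mem_sdiff] at hx hy hxy' hyx'
  have := hxy.2.2.symm
  tauto

end Interedges

section Mader

variable (B : SimpleGraph V) [DecidableRel B.Adj]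

/-- `interedges` counts ordered pairs, so this says `|A| ≥ 2k` and `e(B[A]) > 2k (|A| - k)`. -/
def IsMaderDense (k : ℕ) (A : Finset V) : Prop :=
  2 * k ≤ #A ∧ 4 * k * #A < #(B.interedges A A) + 4 * k ^ 2

variable {B} {k : ℕ} {A : Finset V}

lemma IsMaderDense.nonempty (hA : B.IsMaderDense k A) : A.Nonempty := by
  rw [nonempty_iff_ne_empty]
  rintro rfl
  have := hA.1
  have := hA.2
  simp_all

variable [DecidableEq V]

lemma IsMaderDense.erase (hA : B.IsMaderDense k A) {v : V} (hv : v ∈ A)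
    (hdeg : #{w ∈ A | B.Adj v w} ≤ 2 * k) : B.IsMaderDense k (A.erase v) := by
  obtain ⟨hcard, hdense⟩ := hA
  have hsq := B.card_interedges_le_mul A A
  have herase := B.card_interedges_le_card_interedges_erase_add A v
  have hA' := card_erase_add_one hv
  refine ⟨?_, ?_⟩
  · by_contra hlt
    have : #A = 2 * k := by omega
    rw [this] at hsq hdense
    nlinarith
  · rw [← hA'] at hdense
    nlinarith

lemma IsMaderDense.left_or_right_of_subset_union (hA : B.IsMaderDense k A) {A₁ A₂ : Finset V}
    (hcover : A ⊆ A₁ ∪ A₂) (hcut : ∀ x ∈ A₁ \ A₂, ∀ y ∈ A₂ \ A₁, ¬ B.Adj x y)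
    (hcard : #A₁ + #A₂ ≤ #A + k) (h₁ : 2 * k ≤ #A₁) (h₂ : 2 * k ≤ #A₂) :
    B.IsMaderDense k A₁ ∨ B.IsMaderDense k A₂ := by
  by_contra! hsparse
  simp only [IsMaderDense, h₁, h₂, true_and, not_lt] at hsparse
  have hsplit := B.card_interedges_le_add_of_subset_union hcover hcut
  have := Nat.mul_le_mul_left (4 * k) hcard
  nlinarith [hA.2]

lemma IsMaderDense.exists_ssubset_of_cut (hA : B.IsMaderDense k A)
    (hmin : ∀ v ∈ A, 2 * k < #{w ∈ A | B.Adj v w}) {S C : Set V} (hSA : S ⊆ A)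
    (hS : S.ncard ≤ k) (hC : C ⊆ ↑A \ S) {u v : V} (hu : u ∈ C) (hv : v ∈ ↑A \ S) (hvC : v ∉ C)
    (hclosed : ∀ x ∈ C, ∀ y ∈ ↑A \ S, B.Adj x y → y ∈ C) :
    ∃ A' ⊂ A, B.IsMaderDense k A' := by
  classical
  set A₁ : Finset V := {x ∈ A | x ∈ C ∨ x ∈ S}
  set A₂ : Finset V := {x ∈ A | x ∉ C}
  obtain ⟨huA, huS⟩ : u ∈ A ∧ u ∉ S := hC hu
  obtain ⟨hvA, hvS⟩ : v ∈ A ∧ v ∉ S := hv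
  have hcover : A ⊆ A₁ ∪ A₂ := fun x hx => by
    by_cases x ∈ C <;> simp_all [A₁, A₂]
  have hcut : ∀ x ∈ A₁ \ A₂, ∀ y ∈ A₂ \ A₁, ¬ B.Adj x y := by
    intro x hx y hy hxy
    simp only [A₁, A₂, mem_sdiff, mem_filter, not_and, not_not, not_or] at hx hy
    exact hy.1.2 (hclosed x (hx.2 hx.1.1) y ⟨hy.1.1, (hy.2 hy.1.1).2⟩ hxy)
  have hcard : #A₁ + #A₂ ≤ #A + k := by
    have hinter : ↑(A₁ ∩ A₂) ⊆ S := fun x hx => by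
      simp only [A₁, A₂, coe_inter, coe_filter, Set.mem_inter_iff, Set.mem_ofPred_eq] at hx
      tauto
    have := Set.ncard_le_ncard hinter (A.finite_toSet.subset hSA)
    rw [Set.ncard_coe_finset] at this
    have := card_le_card (union_subset (filter_subset _ A) (filter_subset _ A) : A₁ ∪ A₂ ⊆ A)
    have := card_union_add_card_inter A₁ A₂
    omega
  have h₁ : 2 * k < #A₁ := (hmin u huA).trans <| B.card_filter_adj_lt_card (by simp [A₁, huA, hu])
    fun w hw huw => by
      by_cases hwS : w ∈ S
      · simp [A₁, hw, hwS]
      · simp [A₁, hw, hclosed u hu w ⟨hw, hwS⟩ huw]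
  have h₂ : 2 * k < #A₂ := (hmin v hvA).trans <| B.card_filter_adj_lt_card (by simp [A₂, hvA, hvC])
    fun w hw hvw => by
      simp only [A₂, mem_filter, hw, true_and]
      intro hwC
      exact hvC (hclosed w hwC v ⟨hvA, hvS⟩ hvw.symm)
  have hss₁ : A₁ ⊂ A := filter_ssubset.2 ⟨v, hvA, by simp [hvC, hvS]⟩
  have hss₂ : A₂ ⊂ A := filter_ssubset.2 ⟨u, huA, by simpa using hu⟩
  rcases hA.left_or_right_of_subset_union hcover hcut hcard h₁.le h₂.le with h | h
  exacts [⟨A₁, hss₁, h⟩, ⟨A₂, hss₂, h⟩]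

lemma IsMaderDense.exists_ssubset_of_not_isVertexConnected (hA : B.IsMaderDense k A)
    (hmin : ∀ v ∈ A, 2 * k < #{w ∈ A | B.Adj v w})
    (h : ¬ ((⊤ : B.Subgraph).induce A).IsVertexConnected (k + 1)) :
    ∃ A' ⊂ A, B.IsMaderDense k A' := by
  obtain ⟨w, hw⟩ := hA.nonempty
  have hcard : k + 1 < #A := by
    have := hmin w hw
    have := B.card_filter_adj_lt_card hw fun _ hx _ => hx
    omega
  simp only [Subgraph.IsVertexConnected, Subgraph.induce_verts, Set.ncard_coe_finset, hcard,
    true_and, not_forall] at h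
  obtain ⟨S, hSA, hSk, hS⟩ := h
  have hAS : ¬ (↑A ⊆ S) := fun hAS => by
    have := Set.ncard_le_ncard hAS (A.finite_toSet.subset hSA)
    rw [Set.ncard_coe_finset] at this
    omega
  set H := ((⊤ : B.Subgraph).induce A).deleteVerts S
  have hpre : ¬ H.coe.Preconnected := by
    obtain ⟨x, hx⟩ := Set.nonempty_of_not_subset hAS
    have : Nonempty H.verts := ⟨⟨x, hx⟩⟩
    exact fun hp => hS ⟨hp⟩
  obtain ⟨C, hC, u, hu, v, hv, hvC, hclosed⟩ :=
    Subgraph.exists_adj_closed_of_not_preconnected hpre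
  refine hA.exists_ssubset_of_cut hmin hSA (Nat.le_of_lt_succ hSk) hC hu hv hvC
    fun x hx y hy hxy => hclosed x hx y ?_
  obtain ⟨hxA, hxS⟩ := hC hx
  simp_all [H]

theorem IsMaderDense.exists_isVertexConnected (hA : B.IsMaderDense k A) :
    ∃ H : B.Subgraph, H.IsVertexConnected (k + 1) := by
  induction A using Finset.strongInduction with
  | H A ih =>
  by_cases hlow : ∃ v ∈ A, #{w ∈ A | B.Adj v w} ≤ 2 * k
  · obtain ⟨v, hv, hdeg⟩ := hlow
    exact ih _ (erase_ssubset hv) (hA.erase hv hdeg)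
  push Not at hlow
  by_cases hconn : ((⊤ : B.Subgraph).induce A).IsVertexConnected (k + 1)
  · exact ⟨_, hconn⟩
  obtain ⟨A', hA'A, hA'⟩ := hA.exists_ssubset_of_not_isVertexConnected hlow hconn
  exact ih A' hA'A hA'

end Mader

section MaxCut

variable [Fintype V] (G : SimpleGraph V) [DecidableRel G.Adj]

lemma card_interedges_univ : #(G.interedges univ univ) = 2 * #G.edgeFinset := by
  rw [two_mul_card_edgeFinset, interedges_def, univ_product_univ]

variable [DecidableEq V]

lemma interedges_between_compl (s : Finset V) :
    (G.between s sᶜ).interedges univ univ =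
      {p ∈ G.interedges univ univ | ¬(p.1 ∈ s ↔ p.2 ∈ s)} := by
  ext p
  simp only [mem_interedges_iff, between_adj, mem_filter, mem_univ, true_and,
    Set.mem_compl_iff, mem_coe]
  tauto

theorem exists_card_interedges_le_two_mul_between :
    ∃ s : Finset V, #(G.interedges univ univ) ≤ 2 * #((G.between s sᶜ).interedges univ univ) := by
  have hsum : ∑ _s : Finset V, #(G.interedges univ univ) =
      ∑ s : Finset V, 2 * #((G.between s sᶜ).interedges univ univ) :=
    calc ∑ _s : Finset V, #(G.interedges univ univ)
        = ∑ p ∈ G.interedges univ univ, 2 * #{s : Finset V | ¬(p.1 ∈ s ↔ p.2 ∈ s)} := by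
          rw [sum_const, card_univ, Fintype.card_finset, smul_eq_mul, mul_comm, card_eq_sum_ones,
            sum_mul, one_mul]
          exact sum_congr rfl fun p hp =>
            (two_mul_card_separating (G.mem_interedges_iff.1 hp).2.2.ne).symm
      _ = ∑ s : Finset V, 2 * #((G.between s sᶜ).interedges univ univ) := by
          simp_rw [← mul_sum, interedges_between_compl]
          exact congrArg _ (sum_card_bipartiteAbove_eq_sum_card_bipartiteBelow _).symm
  obtain ⟨s, -, hs⟩ := exists_le_of_sum_le univ_nonempty hsum.le
  exact ⟨s, hs⟩

end MaxCut

end SimpleGraph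

/-- For every integer `k ≥ 1`, every finite simple graph with average degree at least `8k`
(i.e. `2|E| ≥ 8k·|V|`) contains a `(k+1)`-connected bipartite subgraph: a bipartite subgraph
on more than `k+1` vertices that stays connected after deleting any set of at most `k` vertices. -/
theorem stmt4 {V : Type*} [Fintype V] [Nonempty V] (k : ℕ) (hk : 1 ≤ k)
    (G : SimpleGraph V) (h : 8 * k * Fintype.card V ≤ 2 * G.edgeSet.ncard) :
    ∃ H : G.Subgraph, H.coe.Colorable 2 ∧ k + 1 < H.verts.ncard ∧
      ∀ S : Set V, S ⊆ H.verts → S.ncard ≤ k → (H.deleteVerts S).coe.Connected := by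
  classical
  obtain ⟨s, hcut⟩ := G.exists_card_interedges_le_two_mul_between
  have hE : 2 * G.edgeSet.ncard = #(G.interedges univ univ) := by
    rw [G.card_interedges_univ, ← G.coe_edgeFinset, Set.ncard_coe_finset]
  have hsq := G.card_interedges_le_mul univ univ
  have hn := Fintype.card_pos (α := V)
  rw [card_univ] at hsq
  have hdense : (G.between s sᶜ).IsMaderDense k univ := by
    refine ⟨?_, ?_⟩ <;> rw [card_univ]
    · have : 8 * k * Fintype.card V ≤ Fintype.card V * Fintype.card V := by omega
      have := Nat.le_of_mul_le_mul_right this hn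
      omega
    · nlinarith
  obtain ⟨H, hH⟩ := hdense.exists_isVertexConnected
  obtain ⟨hcard, hconn⟩ := hH.ofLE SimpleGraph.between_le
  exact ⟨H.ofLE SimpleGraph.between_le,
    (SimpleGraph.between_isBipartite disjoint_compl_right).subgraph H, hcard,
    fun S hS hSk => hconn S hS (Nat.lt_succ_of_le hSk)⟩
end

section
/- For every integer r ≥ 0, every finite simple graph G contains a bipartite subgraph Ĝ with ∇_r(Ĝ) ≥ ∇_r(G)/2. -/
/-- Average degree `2|E|/|V|` of a graph (as a real number). -/
noncomputable def avgDeg {V : Type*} (G : SimpleGraph V) : ℝ :=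
  2 * G.edgeSet.ncard / Nat.card V

/-- `M` is a depth-`r` shallow minor of `G`: it is obtained by contracting pairwise disjoint
connected subgraphs of radius at most `r` in `G` into vertices and then taking a subgraph. -/
def IsShallowMinor (r : ℕ) {β α : Type*} (G : SimpleGraph β) (M : SimpleGraph α) : Prop :=
  ∃ φ : α → Set β, (∀ a, (φ a).Nonempty) ∧
    (∀ a, ∃ c : φ a, ∀ v : φ a, ∃ p : (SimpleGraph.induce (φ a) G).Walk c v, p.length ≤ r) ∧
    (∀ a b, a ≠ b → Disjoint (φ a) (φ b)) ∧
    (∀ a b, M.Adj a b → ∃ u ∈ φ a, ∃ v ∈ φ b, G.Adj u v)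

/-- `∇_r(G)`: the greatest average degree of a depth-`r` shallow minor of `G`. -/
noncomputable def nablaR (r : ℕ) {β : Type*} (G : SimpleGraph β) : ℝ :=
  sSup {d : ℝ | ∃ (n : ℕ) (M : SimpleGraph (Fin n)), n ≠ 0 ∧ IsShallowMinor r G M ∧ d = avgDeg M}

/-!
Take a shallow minor `M` of `G` attaining `∇_r(G)`, with branch sets `φ a` of radius at most `r`
around centres `cc a`. Colour each vertex of `φ a` by the parity of its distance from `cc a` in
`G[φ a]`, shifted by a bit `f a`. Every edge of a breadth-first search tree is bichromatic, so the
branch sets keep their radius in the bipartite subgraph `Ĝ` of bichromatic edges of `G`. For an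
edge `ab` of `M` realised by an edge `uv` of `G`, flipping `f a` flips whether `uv` is
bichromatic; so a uniformly random `f` keeps each edge of `M` with probability `1/2`, and some `f`
keeps at least half of them. The surviving edges form a depth-`r` minor of `Ĝ` on the same vertex
set with at least half the edges of `M`.
-/

open Finset Function

theorem two_mul_card_filter_eq_card_of_equiv {κ : Type*} [Fintype κ] (P : κ → Prop)
    [DecidablePred P] (e : κ ≃ κ) (he : ∀ x, P (e x) ↔ ¬ P x) :
    2 * #{x | P x} = Fintype.card κ := by
  have hhalf : #{x | P x} = #{x | ¬ P x} :=
    Finset.card_equiv e fun x => by simp [he]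
  rw [two_mul]
  nth_rw 2 [hhalf]
  rw [card_filter_add_card_filter_not, card_univ]

theorem Finset.exists_card_le_two_mul_card_filter {ι κ : Type*} [Fintype κ] [Nonempty κ]
    (E : Finset ι) (P : ι → κ → Prop) [∀ i, DecidablePred (P i)]
    (hP : ∀ i ∈ E, 2 * #{x | P i x} = Fintype.card κ) :
    ∃ x, #E ≤ 2 * #{i ∈ E | P i x} := by
  have hsum : ∑ _x : κ, #E = ∑ x, 2 * #{i ∈ E | P i x} := by
    calc ∑ _x : κ, #E = ∑ i ∈ E, 2 * #{x | P i x} := by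
          rw [sum_congr rfl hP, sum_const, sum_const, card_univ, smul_eq_mul, smul_eq_mul,
            mul_comm]
      _ = ∑ x, 2 * #{i ∈ E | P i x} := by
          rw [← mul_sum, ← mul_sum]
          exact congrArg _ (sum_card_bipartiteAbove_eq_sum_card_bipartiteBelow P)
  obtain ⟨x, -, hx⟩ := exists_le_of_sum_le univ_nonempty hsum.le
  exact ⟨x, hx⟩

namespace SimpleGraph
variable {V : Type*}

theorem Reachable.exists_walk_length_eq_dist_of_forall_adj {G H : SimpleGraph V} {x₀ y : V}
    (hH : ∀ ⦃u v⦄, G.Adj u v → G.dist x₀ v = G.dist x₀ u + 1 → H.Adj u v)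
    (hy : G.Reachable x₀ y) : ∃ p : H.Walk x₀ y, p.length = G.dist x₀ y := by
  induction hd : G.dist x₀ y generalizing y with
  | zero =>
    obtain rfl := hy.dist_eq_zero_iff.mp hd
    exact ⟨.nil, rfl⟩
  | succ n ih =>
    obtain ⟨p, hp⟩ := hy.exists_walk_length_eq_dist
    cases hq : p.reverse with
    | nil => simp_all
    | @cons _ u _ hyu q =>
      have hqn : q.length = n := by
        have := congrArg Walk.length hq
        simp only [Walk.length_reverse, Walk.length_cons] at this
        omega
      have hu : G.dist x₀ u = n := by
        have h₁ := dist_le q.reverse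
        have h₂ := hyu.symm.reachable.dist_triangle_right x₀
        rw [dist_eq_one_iff_adj.mpr hyu.symm] at h₂
        rw [Walk.length_reverse] at h₁
        omega
      obtain ⟨p', hp'⟩ := ih q.reverse.reachable hu
      exact ⟨p'.concat (hH hyu.symm (by omega)), by simp [hp']⟩

theorem two_mul_ncard_edgeSet_eq_card_dart (G : SimpleGraph V) [Fintype V] [DecidableRel G.Adj] :
    2 * G.edgeSet.ncard = Fintype.card G.Dart := by
  rw [dart_card_eq_twice_card_edges, ← coe_edgeFinset, Set.ncard_coe_finset]

def cutGraph (G : SimpleGraph V) (c : V → ZMod 2) : SimpleGraph V where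
  Adj x y := G.Adj x y ∧ c x ≠ c y
  symm := ⟨fun _ _ h => ⟨h.1.symm, h.2.symm⟩⟩
  loopless := ⟨fun _ h => h.2 rfl⟩

theorem cutGraph_le (G : SimpleGraph V) (c : V → ZMod 2) : G.cutGraph c ≤ G := fun _ _ h => h.1

-- `ZMod 2` is `Fin 2` by definition, so `c` itself is a proper `2`-colouring.
theorem colorable_coe_toSubgraph_cutGraph (G : SimpleGraph V) (c : V → ZMod 2) :
    (toSubgraph (G.cutGraph c) (G.cutGraph_le c)).coe.Colorable 2 :=
  ⟨Coloring.mk (fun x => c x) fun h => h.2⟩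

variable {α : Type*}

def contract (H : SimpleGraph V) (φ : α → Set V) : SimpleGraph α :=
  fromRel fun a b => ∃ u ∈ φ a, ∃ v ∈ φ b, H.Adj u v

theorem contract_adj {H : SimpleGraph V} {φ : α → Set V} {a b : α} :
    (H.contract φ).Adj a b ↔ a ≠ b ∧ ∃ u ∈ φ a, ∃ v ∈ φ b, H.Adj u v := by
  refine (fromRel_adj _ a b).trans (and_congr_right fun _ => or_iff_left_of_imp ?_)
  rintro ⟨v, hv, u, hu, h⟩
  exact ⟨u, hu, v, hv, h.symm⟩

noncomputable def layerColoring (G : SimpleGraph V) (φ : α → Set V) (cc : ∀ a, φ a)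
    (f : α → ZMod 2) : V → ZMod 2 :=
  Function.extend (fun x : Σ a, φ a => (x.2 : V))
    (fun x => ((G.induce (φ x.1)).dist (cc x.1) x.2 : ZMod 2) + f x.1) 0

section layerColoring

variable {G : SimpleGraph V} {φ : α → Set V} (cc : ∀ a, φ a)

theorem layerColoring_apply (hφ : Pairwise (Disjoint on φ)) (f : α → ZMod 2) (a : α)
    (x : φ a) : G.layerColoring φ cc f x = ((G.induce (φ a)).dist (cc a) x : ZMod 2) + f a :=
  (Subtype.val_injective.comp (Set.sigmaToiUnion_injective φ hφ)).extend_apply _ _ ⟨a, x⟩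

theorem exists_walk_induce_cutGraph_layerColoring (hφ : Pairwise (Disjoint on φ))
    (f : α → ZMod 2) {a : α} {x : φ a} (hx : (G.induce (φ a)).Reachable (cc a) x) :
    ∃ p : ((G.cutGraph (G.layerColoring φ cc f)).induce (φ a)).Walk (cc a) x,
      p.length = (G.induce (φ a)).dist (cc a) x := by
  refine hx.exists_walk_length_eq_dist_of_forall_adj fun u v huv hd => ⟨huv, ?_⟩
  change G.layerColoring φ cc f u ≠ G.layerColoring φ cc f v
  rw [layerColoring_apply cc hφ, layerColoring_apply cc hφ, hd, Nat.cast_succ, add_right_comm]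
  exact (by decide : ∀ x : ZMod 2, x ≠ x + 1) _

end layerColoring

end SimpleGraph

open SimpleGraph

section ShallowMinor

variable {α β V : Type*} {r : ℕ}

theorem IsShallowMinor.map {G : SimpleGraph V} {G' : SimpleGraph β} {M : SimpleGraph α}
    (f : G →g G') (hf : Injective f) (h : IsShallowMinor r G M) : IsShallowMinor r G' M := by
  obtain ⟨φ, hne, hrad, hdisj, hadj⟩ := h
  refine ⟨fun a => f '' φ a, fun a => (hne a).image f, fun a => ?_,
    fun a b hab => (Set.disjoint_image_iff hf).mpr (hdisj a b hab), fun a b hab => ?_⟩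
  · obtain ⟨c, hc⟩ := hrad a
    let g := induceHom f (Set.mapsTo_image f (φ a))
    refine ⟨g c, ?_⟩
    rintro ⟨_, v, hv, rfl⟩
    obtain ⟨p, hp⟩ := hc ⟨v, hv⟩
    exact ⟨p.map g, (p.length_map g).trans_le hp⟩
  · obtain ⟨u, hu, v, hv, huv⟩ := hadj a b hab
    exact ⟨f u, Set.mem_image_of_mem f hu, f v, Set.mem_image_of_mem f hv, f.map_adj huv⟩

theorem IsShallowMinor.card_le [Finite V] {G : SimpleGraph V} {M : SimpleGraph α}
    (h : IsShallowMinor r G M) : Nat.card α ≤ Nat.card V := by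
  obtain ⟨φ, hne, -, hdisj, -⟩ := h
  refine Nat.card_le_card_of_injective (fun a => (hne a).some)
    fun a b (hab : (hne a).some = (hne b).some) => ?_
  by_contra hne'
  exact Set.disjoint_left.mp (hdisj a b hne') (hne a).some_mem (hab ▸ (hne b).some_mem)

variable {G : SimpleGraph V} {φ : α → Set V} (cc : ∀ a, φ a)

theorem isShallowMinor_inf_contract_cutGraph_layerColoring (M : SimpleGraph α)
    (hne : ∀ a, (φ a).Nonempty)
    (hcc : ∀ a (v : φ a), ∃ p : (G.induce (φ a)).Walk (cc a) v, p.length ≤ r)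
    (hφ : Pairwise (Disjoint on φ)) (f : α → ZMod 2) :
    IsShallowMinor r (G.cutGraph (G.layerColoring φ cc f))
      (M ⊓ (G.cutGraph (G.layerColoring φ cc f)).contract φ) := by
  refine ⟨φ, hne, fun a => ⟨cc a, fun v => ?_⟩, fun a b hab => hφ hab,
    fun a b hab => (contract_adj.mp hab.2).2⟩
  obtain ⟨p, hp⟩ := hcc a v
  obtain ⟨q, hq⟩ := exists_walk_induce_cutGraph_layerColoring cc hφ f p.reachable
  exact ⟨q, hq ▸ (dist_le p).trans hp⟩

theorem exists_ncard_edgeSet_le_two_mul_inf_contract_cutGraph_layerColoring [Fintype α]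
    {M : SimpleGraph α} (hφ : Pairwise (Disjoint on φ))
    (hadj : ∀ a b, M.Adj a b → ∃ u ∈ φ a, ∃ v ∈ φ b, G.Adj u v) :
    ∃ f : α → ZMod 2, M.edgeSet.ncard ≤
      2 * (M ⊓ (G.cutGraph (G.layerColoring φ cc f)).contract φ).edgeSet.ncard := by
  classical
  choose u hu v hv huv using fun d : M.Dart => hadj _ _ d.adj
  set col := G.layerColoring φ cc
  set survives : M.Dart → (α → ZMod 2) → Prop := fun d f => col f (u d) ≠ col f (v d)
  have hflip : ∀ d f, survives d (f + Pi.single d.fst 1) ↔ ¬ survives d f := by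
    intro d f
    have hcu : ∀ f, col f (u d) = _ + f d.fst :=
      fun f => layerColoring_apply cc hφ f _ ⟨u d, hu d⟩
    have hcv : ∀ f, col f (v d) = _ + f d.snd :=
      fun f => layerColoring_apply cc hφ f _ ⟨v d, hv d⟩
    simp only [survives, hcu, hcv, Pi.add_apply, Pi.single_eq_same,
      Pi.single_eq_of_ne d.adj.ne.symm, add_zero, ← add_assoc]
    exact (by decide : ∀ x y : ZMod 2, x + 1 ≠ y ↔ ¬ x ≠ y) _ _
  obtain ⟨f, hf⟩ := (univ : Finset M.Dart).exists_card_le_two_mul_card_filter survives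
    fun d _ => two_mul_card_filter_eq_card_of_equiv _ (Equiv.addRight _) (hflip d)
  refine ⟨f, ?_⟩
  set M' := M ⊓ (G.cutGraph (col f)).contract φ
  have hsurv : #{d | survives d f} ≤ Fintype.card M'.Dart := by
    rw [← Fintype.card_subtype]
    refine Fintype.card_le_of_injective (fun d => ⟨d.1.toProd, d.1.adj, contract_adj.mpr
      ⟨d.1.adj.ne, u d, hu d, v d, hv d, huv d, d.2⟩⟩) fun d d' h => ?_
    exact Subtype.ext (Dart.ext _ _ (congrArg Dart.toProd h :))
  have hM := two_mul_ncard_edgeSet_eq_card_dart M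
  have hM' := two_mul_ncard_edgeSet_eq_card_dart M'
  rw [card_univ] at hf
  omega

theorem IsShallowMinor.exists_cutGraph [Fintype α] {M : SimpleGraph α}
    (h : IsShallowMinor r G M) :
    ∃ (c : V → ZMod 2) (M' : SimpleGraph α), IsShallowMinor r (G.cutGraph c) M' ∧
      M.edgeSet.ncard ≤ 2 * M'.edgeSet.ncard := by
  obtain ⟨φ, hne, hrad, hdisj, hadj⟩ := h
  choose cc hcc using hrad
  have hφ : Pairwise (Disjoint on φ) := fun a b hab => hdisj a b hab
  obtain ⟨f, hf⟩ :=
    exists_ncard_edgeSet_le_two_mul_inf_contract_cutGraph_layerColoring cc hφ hadj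
  exact ⟨_, _, isShallowMinor_inf_contract_cutGraph_layerColoring cc M hne hcc hφ f, hf⟩

end ShallowMinor

section nablaR

variable {α β : Type*} (r : ℕ)

theorem avgDeg_nonneg (G : SimpleGraph α) : 0 ≤ avgDeg G := by
  unfold avgDeg
  positivity

theorem avgDeg_le_two_mul_of_ncard_le {G G' : SimpleGraph α}
    (h : G.edgeSet.ncard ≤ 2 * G'.edgeSet.ncard) : avgDeg G ≤ 2 * avgDeg G' := by
  unfold avgDeg
  rw [← mul_div_assoc]
  gcongr
  exact_mod_cast h

def shallowMinorAvgDegs (G : SimpleGraph β) : Set ℝ :=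
  {d : ℝ | ∃ (n : ℕ) (M : SimpleGraph (Fin n)), n ≠ 0 ∧ IsShallowMinor r G M ∧
    d = avgDeg M}

theorem nablaR_eq_sSup (G : SimpleGraph β) : nablaR r G = sSup (shallowMinorAvgDegs r G) := rfl

theorem nablaR_nonneg (G : SimpleGraph β) : 0 ≤ nablaR r G :=
  Real.sSup_nonneg fun _ ⟨_, M, _, _, hd⟩ => hd ▸ avgDeg_nonneg M

theorem finite_shallowMinorAvgDegs [Finite β] (G : SimpleGraph β) :
    (shallowMinorAvgDegs r G).Finite := by
  refine ((Set.finite_Iic (Nat.card β)).biUnion fun n _ =>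
    Set.finite_range (avgDeg (V := Fin n))).subset ?_
  rintro d ⟨n, M, -, hM, rfl⟩
  exact Set.mem_biUnion (by simpa using hM.card_le) ⟨M, rfl⟩

variable {r}

theorem avgDeg_le_nablaR [Finite β] {G : SimpleGraph β} {n : ℕ} {M : SimpleGraph (Fin n)}
    (hn : n ≠ 0) (hM : IsShallowMinor r G M) : avgDeg M ≤ nablaR r G :=
  le_csSup (finite_shallowMinorAvgDegs r G).bddAbove ⟨n, M, hn, hM, rfl⟩

theorem IsShallowMinor.exists_avgDeg_le_two_mul_nablaR_cutGraph [Finite β] {G : SimpleGraph β}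
    {n : ℕ} {M : SimpleGraph (Fin n)} (hn : n ≠ 0) (h : IsShallowMinor r G M) :
    ∃ c : β → ZMod 2,
      avgDeg M ≤ 2 * nablaR r (toSubgraph (G.cutGraph c) (G.cutGraph_le c)).coe := by
  obtain ⟨c, M', hM', hcard⟩ := h.exists_cutGraph
  refine ⟨c, (avgDeg_le_two_mul_of_ncard_le hcard).trans ?_⟩
  gcongr
  exact avgDeg_le_nablaR hn
    (hM'.map ⟨fun v => ⟨v, trivial⟩, id⟩ fun _ _ h => congrArg Subtype.val h)

end nablaR

/-- For every `r ≥ 0`, every finite simple graph `G` contains a bipartite subgraph `Ĝ`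
with `∇_r(Ĝ) ≥ ∇_r(G)/2`. -/
theorem stmt7 (r : ℕ) {V : Type*} [Fintype V] (G : SimpleGraph V) :
    ∃ Ghat : G.Subgraph, Ghat.coe.Colorable 2 ∧ nablaR r G / 2 ≤ nablaR r Ghat.coe := by
  obtain hS | hS := (shallowMinorAvgDegs r G).eq_empty_or_nonempty
  · refine ⟨_, colorable_coe_toSubgraph_cutGraph G 0, ?_⟩
    rw [nablaR_eq_sSup, hS, Real.sSup_empty, zero_div]
    exact nablaR_nonneg r _
  · obtain ⟨n, M, hn, hM, hd⟩ := hS.csSup_mem (finite_shallowMinorAvgDegs r G)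
    obtain ⟨c, hc⟩ := hM.exists_avgDeg_le_two_mul_nablaR_cutGraph hn
    refine ⟨_, colorable_coe_toSubgraph_cutGraph G c, ?_⟩
    rw [nablaR_eq_sSup, hd]
    linarith
end

section
/- Every graph G that is a subdivision of the (k·2^{k+1} × k)-wall contains a bipartite subgraph that is a subdivision of the (2k × k)-wall. -/
/-- The `(2j × k)`-wall: vertex `(ℓ, i)` is the `(ℓ+1)`-st vertex of the `(i+1)`-st horizontal
path. Horizontal edges join consecutive vertices of each horizontal path; there is a vertical
edge between `(ℓ, i-1)` and `(ℓ, i)` exactly when `ℓ` and `i` have the same parity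
(this encodes, in 0-based indexing, the edges `v_{2ℓ}^{(i-1)} v_{2ℓ}^{(i)}` for even `i` and
`v_{2ℓ-1}^{(i-1)} v_{2ℓ-1}^{(i)}` for odd `i` of the 1-based definition). -/
def wall (j k : ℕ) : SimpleGraph (Fin (2 * j) × Fin k) :=
  SimpleGraph.fromRel (fun p q =>
    (p.2 = q.2 ∧ (p.1 : ℕ) + 1 = q.1) ∨
    (p.1 = q.1 ∧ (p.2 : ℕ) + 1 = q.2 ∧ (p.1 : ℕ) % 2 = (q.2 : ℕ) % 2))

/-- `G` is (isomorphic to) a subdivision of `H`: branch vertices are injected into `G`, each edge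
of `H` is realised by a path in `G`, these paths are internally disjoint, avoid branch vertices
internally, and together cover all vertices and edges of `G`. -/
def IsSubdivisionOf {β α : Type*} (G : SimpleGraph β) (H : SimpleGraph α) : Prop :=
  ∃ f : α ↪ β, ∃ P : ∀ a b, H.Adj a b → G.Walk (f a) (f b),
    (∀ a b (h : H.Adj a b), (P a b h).IsPath) ∧
    (∀ a b (h : H.Adj a b) (c : α), f c ∈ (P a b h).support → c = a ∨ c = b) ∧
    (∀ a b (h : H.Adj a b) a' b' (h' : H.Adj a' b'),
      (s(a, b) : Sym2 α) ≠ s(a', b') →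
      ∀ v ∈ (P a b h).support, v ∈ (P a' b' h').support → v = f a ∨ v = f b) ∧
    (∀ v : β, (∃ a, f a = v) ∨ ∃ a, ∃ b, ∃ h : H.Adj a b, v ∈ (P a b h).support) ∧
    (∀ e ∈ G.edgeSet, ∃ a, ∃ b, ∃ h : H.Adj a b, e ∈ (P a b h).edges)

/-!
Choose `2k` columns `c ℓ` of the big wall with `c ℓ ≡ ℓ (mod 2)`. The row segments between
consecutive chosen columns, together with the vertical edges in chosen columns, form a
subdivision of the `(2k × k)`-wall inside the big wall; composing with the given subdivision
gives `Ghat`.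

A 2-colouring of `Ghat` is determined by colours of its branch vertices that change, along each
subdivided edge, by the parity of its length. Take them from a function on the big wall that
alternates along every subdivided row starting at column `0`, with row `i + 1` shifted against
row `i` by a constant `y i`. Along the subdivided vertical edge of column `x` between rows `i`
and `i + 1` this is consistent exactly when `columnDefect S x i = y i`. The defects of the column
pair `{2s, 2s + 1}` form a vector in `(ZMod 2)^(k-1)`, so by pigeonhole `2k` of the `k·2^k` pairs
share the same vector `y`; their columns of the right parity are the `c ℓ`.
-/

namespace SimpleGraph

namespace Walk

variable {V : Type*} {G : SimpleGraph V} {u v w : V}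

theorem IsPath.append {p : G.Walk u v} {q : G.Walk v w} (hp : p.IsPath) (hq : q.IsPath)
    (h : ∀ x ∈ p.support, x ∈ q.support → x = v) : (p.append q).IsPath := by
  rw [isPath_def, support_append]
  refine hp.support_nodup.append hq.support_nodup.tail fun x hx hx' => ?_
  have hnd := hq.support_nodup
  rw [← cons_tail_support] at hnd
  obtain rfl := h x hx (List.mem_of_mem_tail hx')
  exact (List.nodup_cons.mp hnd).1 hx'

variable [DecidableEq V] {p : G.Walk u v}

theorem IsPath.length_takeUntil_of_getVert_eq (hp : p.IsPath) (hw : w ∈ p.support) {i : ℕ}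
    (hi : i ≤ p.length) (he : p.getVert i = w) : (p.takeUntil w hw).length = i :=
  hp.getVert_injOn (p.length_takeUntil_le_length hw) hi (by rw [getVert_length_takeUntil, he])

theorem IsPath.length_takeUntil_reverse (hp : p.IsPath) (hw : w ∈ p.support)
    (hw' : w ∈ p.reverse.support) :
    (p.reverse.takeUntil w hw').length = p.length - (p.takeUntil w hw).length := by
  have hle := p.length_takeUntil_le_length hw
  refine hp.reverse.length_takeUntil_of_getVert_eq hw' (by simp) ?_
  rw [getVert_reverse, Nat.sub_sub_self hle, getVert_length_takeUntil]

theorem IsPath.length_takeUntil_of_mem_edges (hp : p.IsPath) {x y : V} (he : s(x, y) ∈ p.edges)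
    (hx : x ∈ p.support) (hy : y ∈ p.support) :
    (p.takeUntil x hx).length + 1 = (p.takeUntil y hy).length ∨
      (p.takeUntil y hy).length + 1 = (p.takeUntil x hx).length := by
  obtain ⟨i, hi, hxy⟩ := p.mk_mem_edges_iff_exists.mp he
  rcases Sym2.eq_iff.mp hxy with ⟨rfl, rfl⟩ | ⟨rfl, rfl⟩
  · left
    rw [hp.length_takeUntil_of_getVert_eq hx hi.le rfl,
      hp.length_takeUntil_of_getVert_eq hy hi rfl]
  · right
    rw [hp.length_takeUntil_of_getVert_eq hx hi rfl,
      hp.length_takeUntil_of_getVert_eq hy hi.le rfl]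

end Walk

variable {α β γ : Type*}

/-- The data of `IsSubdivisionOf` without the covering conditions, realising the two orientations
of an edge by mutually reverse paths. -/
structure PathModel (H : SimpleGraph α) (G : SimpleGraph β) where
  branch : α ↪ β
  path : ∀ {a b : α}, H.Adj a b → G.Walk (branch a) (branch b)
  isPath : ∀ {a b : α} (h : H.Adj a b), (path h).IsPath
  eq_or_eq_of_branch_mem : ∀ {a b : α} (h : H.Adj a b) {c : α},
    branch c ∈ (path h).support → c = a ∨ c = b
  eq_or_eq_of_mem_support : ∀ {a b a' b' : α} (h : H.Adj a b) (h' : H.Adj a' b'),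
    s(a, b) ≠ s(a', b') → ∀ {v : β}, v ∈ (path h).support → v ∈ (path h').support →
      v = branch a ∨ v = branch b
  path_symm : ∀ {a b : α} (h : H.Adj a b), path h.symm = (path h).reverse

/-- A `PathModel` given only on the edges oriented by `r`. -/
structure OrientedPathModel (H : SimpleGraph α) (G : SimpleGraph β) (r : α → α → Prop) where
  branch : α ↪ β
  path : ∀ {a b : α}, H.Adj a b → r a b → G.Walk (branch a) (branch b)
  isPath : ∀ {a b : α} (h : H.Adj a b) (hr : r a b), (path h hr).IsPath
  eq_or_eq_of_branch_mem : ∀ {a b : α} (h : H.Adj a b) (hr : r a b) {c : α},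
    branch c ∈ (path h hr).support → c = a ∨ c = b
  eq_or_eq_of_mem_support : ∀ {a b a' b' : α} (h : H.Adj a b) (hr : r a b) (h' : H.Adj a' b')
    (hr' : r a' b'), s(a, b) ≠ s(a', b') → ∀ {v : β}, v ∈ (path h hr).support →
      v ∈ (path h' hr').support → v = branch a ∨ v = branch b

namespace OrientedPathModel

variable {H : SimpleGraph α} {G : SimpleGraph β} {r : α → α → Prop} (M : OrientedPathModel H G r)
  (hr : ∀ {a b : α}, H.Adj a b → r a b ∨ r b a) (hasymm : ∀ {a b : α}, r a b → ¬ r b a)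

open Classical in
noncomputable def toPathModel : PathModel H G where
  branch := M.branch
  path {a b} h :=
    if hab : r a b then M.path h hab else (M.path h.symm ((hr h).resolve_left hab)).reverse
  isPath {a b} h := by
    split_ifs with hab
    exacts [M.isPath h hab, (M.isPath _ _).reverse]
  eq_or_eq_of_branch_mem {a b} h c hc := by
    split_ifs at hc with hab
    · exact M.eq_or_eq_of_branch_mem h hab hc
    · rw [Walk.support_reverse, List.mem_reverse] at hc
      exact (M.eq_or_eq_of_branch_mem _ _ hc).symm
  eq_or_eq_of_mem_support {a b a' b'} h h' hne v hv hv' := by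
    by_cases hab : r a b <;> by_cases hab' : r a' b' <;>
      simp only [hab, hab', dite_true, dite_false, Walk.support_reverse, List.mem_reverse]
        at hv hv'
    · exact M.eq_or_eq_of_mem_support h hab h' hab' hne hv hv'
    · exact M.eq_or_eq_of_mem_support h hab _ _ (by rwa [Sym2.eq_swap (a := b')]) hv hv'
    · exact (M.eq_or_eq_of_mem_support _ _ h' hab' (by rwa [Sym2.eq_swap (a := b)]) hv hv').symm
    · exact (M.eq_or_eq_of_mem_support _ _ _ _
        (by rwa [Sym2.eq_swap (a := b), Sym2.eq_swap (a := b')]) hv hv').symm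
  path_symm {a b} h := by
    by_cases hab : r a b
    · simp [hab, hasymm hab]
    · simp [hab, (hr h).resolve_left hab]

theorem mem_support_toPathModel_path {a b : α} (h : H.Adj a b) {v : β} :
    v ∈ ((M.toPathModel hr hasymm).path h).support ↔
      (∃ hab : r a b, v ∈ (M.path h hab).support) ∨
        ∃ hba : r b a, v ∈ (M.path h.symm hba).support := by
  by_cases hab : r a b
  · simp [toPathModel, hab, hasymm hab]
  · simp [toPathModel, hab, (hr h).resolve_left hab]

end OrientedPathModel

namespace PathModel

variable {K : SimpleGraph γ} {H : SimpleGraph α} {G : SimpleGraph β} (S : PathModel H G)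

def toSubgraph : G.Subgraph where
  verts := Set.range S.branch ∪ {v | ∃ a b, ∃ h : H.Adj a b, v ∈ (S.path h).support}
  Adj u v := ∃ a b, ∃ h : H.Adj a b, s(u, v) ∈ (S.path h).edges
  adj_sub := fun ⟨_, _, h, he⟩ => (S.path h).adj_of_mem_edges he
  edge_vert := fun ⟨a, b, h, he⟩ => Or.inr ⟨a, b, h, (S.path h).fst_mem_support_of_mem_edges he⟩
  symm := ⟨fun _ _ ⟨a, b, h, he⟩ => ⟨a, b, h, Sym2.eq_swap ▸ he⟩⟩

theorem toSubgraph_path_le {a b : α} (h : H.Adj a b) : (S.path h).toSubgraph ≤ S.toSubgraph :=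
  ⟨fun _ hv => Or.inr ⟨a, b, h, (S.path h).mem_verts_toSubgraph.mp hv⟩,
    fun _ _ huv => ⟨a, b, h, Walk.adj_toSubgraph_iff_mem_edges.mp huv⟩⟩

theorem branch_mem_toSubgraph (a : α) : S.branch a ∈ S.toSubgraph.verts := Or.inl ⟨a, rfl⟩

def coePath {a b : α} (h : H.Adj a b) :
    S.toSubgraph.coe.Walk ⟨S.branch a, S.branch_mem_toSubgraph a⟩
      ⟨S.branch b, S.branch_mem_toSubgraph b⟩ :=
  (S.path h).mapToSubgraph.map (Subgraph.inclusion (S.toSubgraph_path_le h))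

theorem map_hom_coePath {a b : α} (h : H.Adj a b) :
    (S.coePath h).map S.toSubgraph.hom = S.path h :=
  ((S.path h).mapToSubgraph.map_map _ _).trans (S.path h).map_mapToSubgraph_hom

theorem mem_support_coePath {a b : α} (h : H.Adj a b) {v : S.toSubgraph.verts} :
    v ∈ (S.coePath h).support ↔ (v : β) ∈ (S.path h).support := by
  have := congrArg Walk.support (S.map_hom_coePath h)
  rw [Walk.support_map] at this
  exact (List.mem_map_of_injective (f := S.toSubgraph.hom) Subtype.val_injective).symm.trans
    (by rw [this]; rfl)

theorem mk_mem_edges_coePath {a b : α} (h : H.Adj a b) {u v : S.toSubgraph.verts} :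
    s(u, v) ∈ (S.coePath h).edges ↔ s((u : β), (v : β)) ∈ (S.path h).edges := by
  have := congrArg Walk.edges (S.map_hom_coePath h)
  rw [Walk.edges_map] at this
  exact (List.mem_map_of_injective (f := Sym2.map S.toSubgraph.hom)
    (Sym2.map.injective Subtype.val_injective)).symm.trans (by rw [this]; rfl)

theorem isSubdivisionOf_toSubgraph : IsSubdivisionOf S.toSubgraph.coe H := by
  refine ⟨S.branch.codRestrict _ S.branch_mem_toSubgraph, fun _ _ => S.coePath,
    fun _ _ h => ?_, fun _ _ h c hc => ?_, fun _ _ h _ _ h' hne v hv hv' => ?_,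
    fun ⟨v, hv⟩ => ?_, fun e he => ?_⟩
  · exact (S.map_hom_coePath h ▸ S.isPath h).of_map
  · exact S.eq_or_eq_of_branch_mem h ((S.mem_support_coePath h).mp hc)
  · simpa [Subtype.ext_iff] using S.eq_or_eq_of_mem_support h h' hne
      ((S.mem_support_coePath h).mp hv) ((S.mem_support_coePath h').mp hv')
  · rcases hv with ⟨a, rfl⟩ | ⟨a, b, h, hv⟩
    · exact Or.inl ⟨a, rfl⟩
    · exact Or.inr ⟨a, b, h, (S.mem_support_coePath h).mpr hv⟩
  · induction e using Sym2.ind with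
    | _ u v =>
      obtain ⟨a, b, h, huv⟩ := he
      exact ⟨a, b, h, (S.mk_mem_edges_coePath h).mpr huv⟩

section Coloring

variable (ε : α → ZMod 2) [DecidableEq β]

def label {a b : α} (h : H.Adj a b) (v : β) (hv : v ∈ (S.path h).support) : ZMod 2 :=
  ε a + ((S.path h).takeUntil v hv).length

theorem label_ne_label_of_mem_edges {a b : α} (h : H.Adj a b) {u w : β}
    (huw : s(u, w) ∈ (S.path h).edges) (hu : u ∈ (S.path h).support)
    (hw : w ∈ (S.path h).support) : S.label ε h u hu ≠ S.label ε h w hw := by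
  rcases (S.isPath h).length_takeUntil_of_mem_edges huw hu hw with huw' | huw' <;>
    simp [label, ← huw']

variable {S ε} (hε : ∀ {a b : α} (h : H.Adj a b), ε b = ε a + (S.path h).length)
include hε

theorem label_branch {a b c : α} (h : H.Adj a b) (hc : S.branch c ∈ (S.path h).support) :
    S.label ε h _ hc = ε c := by
  rcases S.eq_or_eq_of_branch_mem h hc with rfl | rfl
  · simp [label]
  · rw [label, (S.isPath h).length_takeUntil_of_getVert_eq hc le_rfl (Walk.getVert_length _),
      hε h]

theorem label_symm {a b : α} (h : H.Adj a b) {v : β} (hv : v ∈ (S.path h).support)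
    (hv' : v ∈ (S.path h.symm).support) : S.label ε h.symm v hv' = S.label ε h v hv := by
  have hle := (S.path h).length_takeUntil_le_length hv
  simp only [label, S.path_symm h]
  rw [(S.isPath h).length_takeUntil_reverse hv, Nat.cast_sub hle, hε h]
  generalize ε a = x, ((S.path h).length : ZMod 2) = y,
    (((S.path h).takeUntil v hv).length : ZMod 2) = z
  revert x y z
  decide

theorem label_eq_label {a b a' b' : α} (h : H.Adj a b) (h' : H.Adj a' b') {v : β}
    (hv : v ∈ (S.path h).support) (hv' : v ∈ (S.path h').support) :
    S.label ε h v hv = S.label ε h' v hv' := by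
  by_cases hne : s(a, b) = s(a', b')
  · rcases Sym2.eq_iff.mp hne with ⟨rfl, rfl⟩ | ⟨rfl, rfl⟩
    · rfl
    · exact (label_symm hε h hv hv').symm
  · rcases S.eq_or_eq_of_mem_support h h' hne hv hv' with rfl | rfl <;>
      rw [label_branch hε, label_branch hε]

end Coloring

theorem colorable_toSubgraph (ε : α → ZMod 2)
    (hε : ∀ {a b : α} (h : H.Adj a b), ε b = ε a + (S.path h).length) :
    S.toSubgraph.coe.Colorable 2 := by
  classical
  let color (v : β) : ZMod 2 :=
    if hv : ∃ e : {p : α × α // H.Adj p.1 p.2}, v ∈ (S.path e.2).support then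
      S.label ε hv.choose.2 v hv.choose_spec
    else 0
  have color_eq {a b : α} (h : H.Adj a b) {v : β} (hv : v ∈ (S.path h).support) :
      color v = S.label ε h v hv := by
    have hex : ∃ e : {p : α × α // H.Adj p.1 p.2}, v ∈ (S.path e.2).support := ⟨⟨(a, b), h⟩, hv⟩
    simp only [color, dif_pos hex]
    exact label_eq_label hε _ _ _ _
  refine ZMod.card 2 ▸ (Coloring.mk (G := S.toSubgraph.coe) (fun v => color v) ?_).colorable
  rintro u w ⟨a, b, h, huw⟩
  rw [color_eq h ((S.path h).fst_mem_support_of_mem_edges huw),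
    color_eq h ((S.path h).snd_mem_support_of_mem_edges huw)]
  exact S.label_ne_label_of_mem_edges ε h huw _ _

open Classical in
noncomputable def edgeParity (a b : α) : ZMod 2 :=
  if h : H.Adj a b then (S.path h).length else 0

theorem edgeParity_of_adj {a b : α} (h : H.Adj a b) : S.edgeParity a b = (S.path h).length :=
  dif_pos h

theorem edgeParity_comm (a b : α) : S.edgeParity a b = S.edgeParity b a := by
  by_cases h : H.Adj a b
  · rw [S.edgeParity_of_adj h, S.edgeParity_of_adj h.symm, S.path_symm, Walk.length_reverse]
  · simp [edgeParity, h, H.adj_comm]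

theorem eq_add_edgeParity_comm {ε : α → ZMod 2} {a b : α} (h : ε b = ε a + S.edgeParity a b) :
    ε a = ε b + S.edgeParity b a := by
  rw [h, edgeParity_comm]
  generalize ε a = x, S.edgeParity b a = y
  revert x y
  decide

def lift : ∀ {x y : α}, H.Walk x y → G.Walk (S.branch x) (S.branch y)
  | _, _, .nil => .nil
  | _, _, .cons h p => (S.path h).append (lift p)

theorem lift_append {x y z : α} (p : H.Walk x y) (q : H.Walk y z) :
    S.lift (p.append q) = (S.lift p).append (S.lift q) := by
  induction p with
  | nil => rfl
  | cons h p ih => simp [lift, ih, Walk.append_assoc]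

theorem lift_reverse {x y : α} (p : H.Walk x y) : S.lift p.reverse = (S.lift p).reverse := by
  induction p with
  | nil => rfl
  | cons h p ih =>
    simp only [Walk.reverse_cons, lift_append, ih, lift, S.path_symm h, Walk.reverse_append,
      Walk.append_nil]

theorem mem_support_lift {x y : α} {p : H.Walk x y} {v : β} (hv : v ∈ (S.lift p).support) :
    v = S.branch x ∨ ∃ d ∈ p.darts, v ∈ (S.path d.adj).support := by
  induction p with
  | nil => exact Or.inl (by simpa [lift] using hv)
  | cons h p ih =>
    rw [lift, Walk.mem_support_append_iff] at hv
    rcases hv with hv | hv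
    · exact Or.inr ⟨⟨_, h⟩, List.mem_cons_self, hv⟩
    · rcases ih hv with rfl | ⟨d, hd, hv⟩
      · exact Or.inr ⟨⟨_, h⟩, List.mem_cons_self, Walk.end_mem_support _⟩
      · exact Or.inr ⟨d, List.mem_cons_of_mem _ hd, hv⟩

theorem mem_support_of_branch_mem_lift {x y c : α} {p : H.Walk x y}
    (hc : S.branch c ∈ (S.lift p).support) : c ∈ p.support := by
  rcases S.mem_support_lift hc with hc | ⟨d, hd, hc⟩
  · rw [S.branch.injective hc]
    exact p.start_mem_support
  · rcases S.eq_or_eq_of_branch_mem d.adj hc with rfl | rfl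
    exacts [p.dart_fst_mem_support_of_mem_darts hd, p.dart_snd_mem_support_of_mem_darts hd]

theorem isPath_lift {x y : α} {p : H.Walk x y} (hp : p.IsPath) : (S.lift p).IsPath := by
  induction p with
  | nil => exact Walk.IsPath.nil
  | @cons a c _ h p ih =>
    rw [Walk.cons_isPath_iff] at hp
    refine (S.isPath h).append (ih hp.1) fun v hv hv' => ?_
    rcases S.mem_support_lift hv' with rfl | ⟨d, hd, hvd⟩
    · rfl
    have hd' : s(d.fst, d.snd) ∈ p.edges := List.mem_map_of_mem hd
    have hne : s(a, c) ≠ s(d.fst, d.snd) := fun he =>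
      hp.2 (p.fst_mem_support_of_mem_edges (he ▸ hd'))
    rcases S.eq_or_eq_of_mem_support h d.adj hne hv hvd with rfl | rfl
    · exact absurd (S.mem_support_of_branch_mem_lift hv') hp.2
    · rfl

theorem eq_add_length_lift (ε : α → ZMod 2) {x y : α} {p : H.Walk x y}
    (hε : ∀ d ∈ p.darts, ε d.snd = ε d.fst + (S.path d.adj).length) :
    ε y = ε x + (S.lift p).length := by
  induction p with
  | nil => simp [lift]
  | cons h p ih =>
    rw [lift, Walk.length_append, ih fun d hd => hε d (List.mem_cons_of_mem _ hd),
      hε _ List.mem_cons_self, Nat.cast_add, add_assoc]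

theorem eq_of_mem_support_of_mem_support (T : PathModel K H) {a b a' b' : γ} (h : K.Adj a b)
    (h' : K.Adj a' b') {x y : α} (hxy : x ≠ y) (hx : x ∈ (T.path h).support)
    (hy : y ∈ (T.path h).support) (hx' : x ∈ (T.path h').support)
    (hy' : y ∈ (T.path h').support) : s(a, b) = s(a', b') := by
  by_contra hne
  have hne' : s(a', b') ≠ s(a, b) := Ne.symm hne
  rcases T.eq_or_eq_of_mem_support h h' hne hx hx' with rfl | rfl <;>
  rcases T.eq_or_eq_of_mem_support h h' hne hy hy' with rfl | rfl <;>
  rcases T.eq_or_eq_of_mem_support h' h hne' hx' hx with hx | hx <;>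
  rcases T.eq_or_eq_of_mem_support h' h hne' hy' hy with hy | hy <;>
  simp_all

def comp (T : PathModel K H) : PathModel K G where
  branch := T.branch.trans S.branch
  path h := S.lift (T.path h)
  isPath h := S.isPath_lift (T.isPath h)
  eq_or_eq_of_branch_mem h _ hc :=
    T.eq_or_eq_of_branch_mem h (S.mem_support_of_branch_mem_lift hc)
  eq_or_eq_of_mem_support {a b a' b'} h h' hne v hv hv' := by
    obtain ⟨x, rfl⟩ : ∃ x, v = S.branch x := by
      rcases S.mem_support_lift hv with hv | ⟨d, hd, hv⟩
      · exact ⟨_, hv⟩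
      rcases S.mem_support_lift hv' with hv' | ⟨d', hd', hv'⟩
      · exact ⟨_, hv'⟩
      by_cases hdd : s(d.fst, d.snd) = s(d'.fst, d'.snd)
      · have hdd' : s(d.fst, d.snd) ∈ (T.path h').edges := hdd ▸ List.mem_map_of_mem hd'
        exact absurd (T.eq_of_mem_support_of_mem_support h h' d.fst_ne_snd
          (Walk.dart_fst_mem_support_of_mem_darts _ hd)
          (Walk.dart_snd_mem_support_of_mem_darts _ hd)
          (Walk.fst_mem_support_of_mem_edges _ hdd') (Walk.snd_mem_support_of_mem_edges _ hdd'))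
          hne
      · rcases S.eq_or_eq_of_mem_support d.adj d'.adj hdd hv hv' with hv | hv <;> exact ⟨_, hv⟩
    rcases T.eq_or_eq_of_mem_support h h' hne (S.mem_support_of_branch_mem_lift hv)
      (S.mem_support_of_branch_mem_lift hv') with rfl | rfl
    exacts [Or.inl rfl, Or.inr rfl]
  path_symm h := by
    change S.lift (T.path h.symm) = (S.lift (T.path h)).reverse
    rw [T.path_symm, S.lift_reverse]

end PathModel

end SimpleGraph

open SimpleGraph

theorem IsSubdivisionOf.nonempty_pathModel {α β : Type*} {H : SimpleGraph α} {G : SimpleGraph β}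
    (h : IsSubdivisionOf G H) : Nonempty (PathModel H G) := by
  obtain ⟨f, P, hpath, hbranch, hdisj, -, -⟩ := h
  let M : OrientedPathModel H G WellOrderingRel :=
    { branch := f
      path := fun h _ => P _ _ h
      isPath := fun h _ => hpath _ _ h
      eq_or_eq_of_branch_mem := fun h _ c hc => hbranch _ _ h c hc
      eq_or_eq_of_mem_support := fun h _ h' _ hne v hv hv' => hdisj _ _ h _ _ h' hne v hv hv' }
  exact ⟨M.toPathModel (fun h => (trichotomous_of WellOrderingRel _ _).imp_right
    (Or.resolve_left · h.ne)) asymm⟩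

/-- The edges of `wall j k`, oriented rightwards and upwards. -/
def wallRel (j k : ℕ) (p q : Fin (2 * j) × Fin k) : Prop :=
  (p.2 = q.2 ∧ (p.1 : ℕ) + 1 = q.1) ∨
    (p.1 = q.1 ∧ (p.2 : ℕ) + 1 = q.2 ∧ (p.1 : ℕ) % 2 = (q.2 : ℕ) % 2)

namespace wall

variable {β : Type*} {G : SimpleGraph β} {j j' k : ℕ}

theorem wallRel_asymm {p q : Fin (2 * j) × Fin k} (h : wallRel j k p q) : ¬ wallRel j k q p := by
  unfold wallRel at *
  omega

theorem adj_iff {p q : Fin (2 * j) × Fin k} :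
    (wall j k).Adj p q ↔ wallRel j k p q ∨ wallRel j k q p := by
  refine (SimpleGraph.fromRel_adj _ p q).trans ⟨And.right, fun h => ⟨?_, h⟩⟩
  rintro rfl
  exact (h.elim id id).elim (by omega) (by omega)

theorem adj_of_wallRel {p q : Fin (2 * j) × Fin k} (h : wallRel j k p q) : (wall j k).Adj p q :=
  adj_iff.mpr (Or.inl h)

def rowWalk (i : Fin k) (x : ℕ) :
    ∀ (m : ℕ) (h : x + m < 2 * j), (wall j k).Walk (⟨x, by omega⟩, i) (⟨x + m, h⟩, i)
  | 0, _ => .nil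
  | m + 1, h => (rowWalk i x m (by omega)).concat (adj_of_wallRel (Or.inl ⟨rfl, rfl⟩))

theorem mem_support_rowWalk {i : Fin k} {x m : ℕ} {h : x + m < 2 * j}
    {v : Fin (2 * j) × Fin k} :
    v ∈ (rowWalk i x m h).support ↔ v.2 = i ∧ x ≤ v.1 ∧ (v.1 : ℕ) ≤ x + m := by
  induction m with
  | zero =>
    simp only [rowWalk, Walk.support_nil, List.mem_singleton, Prod.ext_iff, Fin.ext_iff]
    omega
  | succ m ih =>
    simp only [rowWalk, Walk.support_concat, List.mem_append, ih, List.mem_singleton,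
      Prod.ext_iff, Fin.ext_iff]
    omega

theorem isPath_rowWalk (i : Fin k) (x m : ℕ) (h : x + m < 2 * j) : (rowWalk i x m h).IsPath := by
  induction m with
  | zero => exact Walk.IsPath.nil
  | succ m ih => exact (ih (by omega)).concat (by simp [mem_support_rowWalk]) _

section Subwall

variable {c : Fin (2 * j) → Fin (2 * j')} (hc : StrictMono c)
  (hpar : ∀ ℓ, (c ℓ : ℕ) % 2 = (ℓ : ℕ) % 2)

def subwallPath {a b : Fin (2 * j) × Fin k} (hab : wallRel j k a b) :
    (wall j' k).Walk (c a.1, a.2) (c b.1, b.2) :=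
  if hrow : a.2 = b.2 then
    have hlt : c a.1 < c b.1 := hc (Fin.lt_def.mpr (by unfold wallRel at hab; omega))
    (rowWalk a.2 (c a.1) (c b.1 - c a.1) (by omega)).copy rfl
      (Prod.ext (Fin.ext (by dsimp only; omega)) hrow)
  else
    have hcol : a.1 = b.1 ∧ (a.2 : ℕ) + 1 = b.2 ∧ (a.1 : ℕ) % 2 = (b.2 : ℕ) % 2 :=
      hab.resolve_left (hrow ∘ And.left)
    (adj_of_wallRel (p := (c a.1, a.2)) (q := (c b.1, b.2))
      (Or.inr ⟨congrArg c hcol.1, hcol.2.1, (hpar _).trans hcol.2.2⟩)).toWalk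

theorem mem_box_of_mem_support_subwallPath {a b : Fin (2 * j) × Fin k} (hab : wallRel j k a b)
    {v : Fin (2 * j') × Fin k} (hv : v ∈ (subwallPath hc hpar hab).support) :
    (c a.1 : ℕ) ≤ v.1 ∧ (v.1 : ℕ) ≤ c b.1 ∧ (a.2 : ℕ) ≤ v.2 ∧ (v.2 : ℕ) ≤ b.2 := by
  unfold subwallPath at hv
  split_ifs at hv with hrow
  · have hlt : c a.1 < c b.1 := hc (Fin.lt_def.mpr (by unfold wallRel at hab; omega))
    rw [Walk.support_copy, mem_support_rowWalk] at hv
    rw [Fin.lt_def] at hlt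
    omega
  · have hcol := congrArg (fun x => (c x : ℕ)) (hab.resolve_left (hrow ∘ And.left)).1
    unfold wallRel at hab
    simp only [Adj.support_toWalk, List.mem_pair, Prod.ext_iff, Fin.ext_iff] at hv hcol
    omega

theorem isPath_subwallPath {a b : Fin (2 * j) × Fin k} (hab : wallRel j k a b) :
    (subwallPath hc hpar hab).IsPath := by
  unfold subwallPath
  split_ifs with hrow
  · exact (Walk.isPath_copy _ _ _).mpr (isPath_rowWalk _ _ _ _)
  · exact Walk.IsPath.mk' (by simp [hrow])

theorem eq_or_eq_of_mem_support_subwallPath {a b d : Fin (2 * j) × Fin k} (hab : wallRel j k a b)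
    (hd : (c d.1, d.2) ∈ (subwallPath hc hpar hab).support) : d = a ∨ d = b := by
  have hbox := mem_box_of_mem_support_subwallPath hc hpar hab hd
  have h1 := hc.le_iff_le (a := a.1) (b := d.1)
  have h2 := hc.le_iff_le (a := d.1) (b := b.1)
  simp only [Fin.le_def] at h1 h2 hbox
  unfold wallRel at hab
  simp only [Prod.ext_iff, Fin.ext_iff]
  omega

theorem eq_or_eq_of_mem_support_subwallPath_of_ne {a b a' b' : Fin (2 * j) × Fin k}
    (hab : wallRel j k a b) (hab' : wallRel j k a' b') (hne : s(a, b) ≠ s(a', b'))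
    {v : Fin (2 * j') × Fin k} (hv : v ∈ (subwallPath hc hpar hab).support)
    (hv' : v ∈ (subwallPath hc hpar hab').support) : v = (c a.1, a.2) ∨ v = (c b.1, b.2) := by
  have hbox := mem_box_of_mem_support_subwallPath hc hpar hab hv
  have hbox' := mem_box_of_mem_support_subwallPath hc hpar hab' hv'
  have h1 := hc.lt_iff_lt (a := a'.1) (b := b.1)
  have h2 := hc.lt_iff_lt (a := a.1) (b := b'.1)
  have h3 : a.1 = b.1 → c a.1 = c b.1 := congrArg c
  simp only [Fin.lt_def] at h1 h2
  simp only [ne_eq, Sym2.eq_iff, Prod.ext_iff, Fin.ext_iff, not_or] at hne h3 ⊢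
  unfold wallRel at hab hab'
  omega

def orientedSubwall : OrientedPathModel (wall j k) (wall j' k) (wallRel j k) where
  branch := ⟨Prod.map c id, hc.injective.prodMap Function.injective_id⟩
  path _ hab := subwallPath hc hpar hab
  isPath _ hab := isPath_subwallPath hc hpar hab
  eq_or_eq_of_branch_mem _ hab _ hd := eq_or_eq_of_mem_support_subwallPath hc hpar hab hd
  eq_or_eq_of_mem_support _ hab _ hab' hne _ hv hv' :=
    eq_or_eq_of_mem_support_subwallPath_of_ne hc hpar hab hab' hne hv hv'

noncomputable def subwall : PathModel (wall j k) (wall j' k) :=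
  (orientedSubwall hc hpar).toPathModel adj_iff.mp wallRel_asymm

theorem snd_eq_or_fst_eq_of_mem_support_subwall_path {a b : Fin (2 * j) × Fin k}
    (h : (wall j k).Adj a b) {u w : Fin (2 * j') × Fin k}
    (hu : u ∈ ((subwall hc hpar).path h).support)
    (hw : w ∈ ((subwall hc hpar).path h).support) :
    u.2 = w.2 ∨ ∃ ℓ, u.1 = c ℓ ∧ w.1 = c ℓ := by
  have key {x y : Fin (2 * j) × Fin k} (hxy : wallRel j k x y)
      (hu : u ∈ (subwallPath hc hpar hxy).support)
      (hw : w ∈ (subwallPath hc hpar hxy).support) :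
      u.2 = w.2 ∨ ∃ ℓ, u.1 = c ℓ ∧ w.1 = c ℓ := by
    have hu := mem_box_of_mem_support_subwallPath hc hpar hxy hu
    have hw := mem_box_of_mem_support_subwallPath hc hpar hxy hw
    by_cases hrow : x.2 = y.2
    · exact Or.inl (Fin.ext (by rw [Fin.ext_iff] at hrow; omega))
    · have hcol := congrArg (fun x => (c x : ℕ)) (hxy.resolve_left (hrow ∘ And.left)).1
      exact Or.inr ⟨x.1, Fin.ext (by omega), Fin.ext (by omega)⟩
  rw [subwall, OrientedPathModel.mem_support_toPathModel_path _ adj_iff.mp wallRel_asymm] at hu hw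
  dsimp only [orientedSubwall] at hu hw
  rcases hu with ⟨hab, hu⟩ | ⟨hba, hu⟩ <;> rcases hw with ⟨hab', hw⟩ | ⟨hba', hw⟩
  · exact key hab hu hw
  · exact absurd hba' (wallRel_asymm hab)
  · exact absurd hab' (wallRel_asymm hba)
  · exact key hba hu hw

theorem eq_add_length_comp_subwall_path (S : PathModel (wall j' k) G)
    (ε : Fin (2 * j') × Fin k → ZMod 2)
    (hε : ∀ p q, (wall j' k).Adj p q → (p.2 = q.2 ∨ ∃ ℓ, p.1 = c ℓ ∧ q.1 = c ℓ) →
      ε q = ε p + S.edgeParity p q)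
    {a b : Fin (2 * j) × Fin k} (h : (wall j k).Adj a b) :
    ε (c b.1, b.2) = ε (c a.1, a.2) + ((S.comp (subwall hc hpar)).path h).length :=
  S.eq_add_length_lift ε fun d hd => (S.edgeParity_of_adj d.adj) ▸ hε _ _ d.adj
    (snd_eq_or_fst_eq_of_mem_support_subwall_path hc hpar h
      (Walk.dart_fst_mem_support_of_mem_darts _ hd) (Walk.dart_snd_mem_support_of_mem_darts _ hd))

end Subwall

section Potential

variable (S : PathModel (wall j' k) G) (y : ℕ → ZMod 2)

noncomputable def rowParity (i : Fin k) (x : ℕ) : ZMod 2 :=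
  ∑ t ∈ Finset.range x,
    if h : t + 1 < 2 * j' then S.edgeParity (⟨t, by omega⟩, i) (⟨t + 1, h⟩, i) else 0

/-- The parity of the length of the walk that runs along row `i` from column `0` to column `x`,
up column `x`, and back along row `i + 1` to column `0`. -/
noncomputable def columnDefect (x : Fin (2 * j')) (i : ℕ) : ZMod 2 :=
  if hi : i + 1 < k then
    rowParity S ⟨i, by omega⟩ x + rowParity S ⟨i + 1, hi⟩ x +
      S.edgeParity (x, ⟨i, by omega⟩) (x, ⟨i + 1, hi⟩)
  else 0

noncomputable def potential (p : Fin (2 * j') × Fin k) : ZMod 2 :=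
  rowParity S p.2 p.1 + ∑ r ∈ Finset.range p.2, y r

variable {c : Fin (2 * j) → Fin (2 * j')} (hpar : ∀ ℓ, (c ℓ : ℕ) % 2 = (ℓ : ℕ) % 2)
  (hy : ∀ (ℓ : Fin (2 * j)) i, i + 1 < k → (ℓ : ℕ) % 2 = (i + 1) % 2 →
    columnDefect S (c ℓ) i = y i)
include hpar hy

theorem potential_eq_add_edgeParity_of_wallRel {p q : Fin (2 * j') × Fin k}
    (hpq : wallRel j' k p q) (hrc : p.2 = q.2 ∨ ∃ ℓ, p.1 = c ℓ ∧ q.1 = c ℓ) :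
    potential S y q = potential S y p + S.edgeParity p q := by
  obtain ⟨⟨x, hx⟩, ⟨i, hi⟩⟩ := p
  obtain ⟨⟨x', hx'⟩, ⟨i', hi'⟩⟩ := q
  rcases hpq with ⟨hrow, hcol⟩ | ⟨hcol, hrow, hxpar⟩
  · simp only [Fin.mk.injEq] at hrow hcol
    subst hrow hcol
    simp only [potential, rowParity, Finset.sum_range_succ, dif_pos hx']
    ring
  · simp only [Fin.mk.injEq] at hrow hcol hxpar
    subst hrow hcol
    obtain ⟨ℓ, hℓ, -⟩ := hrc.resolve_left (by simp)
    have := hy ℓ i hi' (by rw [← hpar, ← hℓ]; exact hxpar)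
    rw [← hℓ, columnDefect, dif_pos hi'] at this
    simp only [potential, Finset.sum_range_succ, ← this]
    generalize rowParity S _ _ = r₁, rowParity S _ _ = r₂
    generalize S.edgeParity _ _ = e, ∑ r ∈ Finset.range i, y r = s
    revert r₁ r₂ e s
    decide

theorem potential_eq_add_edgeParity {p q : Fin (2 * j') × Fin k} (hpq : (wall j' k).Adj p q)
    (hrc : p.2 = q.2 ∨ ∃ ℓ, p.1 = c ℓ ∧ q.1 = c ℓ) :
    potential S y q = potential S y p + S.edgeParity p q := by
  rcases adj_iff.mp hpq with hpq | hqp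
  · exact potential_eq_add_edgeParity_of_wallRel S y hpar hy hpq hrc
  · refine S.eq_add_edgeParity_comm (potential_eq_add_edgeParity_of_wallRel S y hpar hy hqp ?_)
    exact hrc.imp Eq.symm fun ⟨ℓ, hp, hq⟩ => ⟨ℓ, hq, hp⟩

end Potential

theorem exists_columns (k : ℕ) (σ : Fin (2 * (k * 2 ^ k)) → ℕ → ZMod 2) :
    ∃ (c : Fin (2 * k) → Fin (2 * (k * 2 ^ k))) (y : ℕ → ZMod 2), StrictMono c ∧
      (∀ ℓ, (c ℓ : ℕ) % 2 = (ℓ : ℕ) % 2) ∧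
      ∀ (ℓ : Fin (2 * k)) i, i + 1 < k → (ℓ : ℕ) % 2 = (i + 1) % 2 → σ (c ℓ) i = y i := by
  let τ (s : Fin (k * 2 ^ k)) (i : Fin (k - 1)) : ZMod 2 := σ ⟨2 * s + (i + 1) % 2, by omega⟩ i
  have hcard :
      Fintype.card (Fin (k - 1) → ZMod 2) * (2 * k) ≤ Fintype.card (Fin (k * 2 ^ k)) := by
    rcases k with _ | k
    · simp
    · simp only [Fintype.card_fun, ZMod.card, Fintype.card_fin, Nat.add_sub_cancel, pow_succ]
      ring_nf
      rfl
  obtain ⟨y, hy⟩ := Fintype.exists_le_card_fiber_of_mul_le_card τ hcard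
  obtain ⟨T, hT, hTcard⟩ := Finset.exists_subset_card_eq hy
  let e := T.orderEmbOfFin hTcard
  refine ⟨fun ℓ => ⟨2 * e ℓ + ℓ % 2, by omega⟩, fun i => if h : i < k - 1 then y ⟨i, h⟩ else 0,
    fun ℓ ℓ' h => ?_, fun ℓ => by simp, fun ℓ i hi hℓ => ?_⟩
  · have := e.strictMono h
    simp only [Fin.lt_def] at this ⊢
    omega
  · have hτ : τ (e ℓ) = y := (Finset.mem_filter.mp (hT (T.orderEmbOfFin_mem hTcard ℓ))).2
    dsimp only
    rw [dif_pos (by omega), ← congrFun hτ ⟨i, by omega⟩]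
    simp only [τ, hℓ]

end wall

theorem stmt8_general (k : ℕ) {β : Type*} (G : SimpleGraph β)
    (h : IsSubdivisionOf G (wall (k * 2 ^ k) k)) :
    ∃ Ghat : G.Subgraph, Ghat.coe.Colorable 2 ∧ IsSubdivisionOf Ghat.coe (wall k k) := by
  obtain ⟨S⟩ := h.nonempty_pathModel
  obtain ⟨c, y, hc, hpar, hy⟩ := wall.exists_columns k (wall.columnDefect S)
  let M := S.comp (wall.subwall (k := k) hc hpar)
  refine ⟨M.toSubgraph, M.colorable_toSubgraph (fun a => wall.potential S y (c a.1, a.2))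
    fun h => ?_, M.isSubdivisionOf_toSubgraph⟩
  exact wall.eq_add_length_comp_subwall_path hc hpar S _
    (fun p q hpq hrc => wall.potential_eq_add_edgeParity S y hpar hy hpq hrc) h

/-- Every graph that is a subdivision of the `(k·2^{k+1} × k)`-wall contains a bipartite
subgraph which is a subdivision of the `(2k × k)`-wall. -/
theorem stmt8 (k : ℕ) (hk : 1 ≤ k) {β : Type*} (G : SimpleGraph β)
    (h : IsSubdivisionOf G (wall (k * 2 ^ k) k)) :
    ∃ Ghat : G.Subgraph, Ghat.coe.Colorable 2 ∧ IsSubdivisionOf Ghat.coe (wall k k) :=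
  stmt8_general k G h
end
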